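/- arXiv:1511.01254 — 7 statements merged into one kernel-verified Lean document; each statement's English description precedes it below -/
import Mathlib

section
/- Let q be a power of an odd prime, let ψ be a nontrivial additive character of 𝔽_q, and let z ∈ sl(2,𝔽_q) be elliptic. Then the sum of ψ(trace(z·e)) over all elliptic elements e ∈ sl(2,𝔽_q) equals q. -/
open scoped Classical

/-!
For trace-zero `e`, ellipticity means that `-det e` is a nonsquare, and as `q` is odd,
`2 · [e elliptic] = 2 - #{x | det (e + x) = 0} - [det e = 0]`. So twice the sum is
`2 S₁ - S₂ - S₃`, where `S₁` sums `ψ (tr (z e))` over `sl₂`, `S₂` over all singular matrices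
(every matrix is uniquely `e + x` with `e ∈ sl₂` since `2` is invertible, and `tr z = 0`), and
`S₃` over the nilpotent cone. As `-det z` is a nonsquare, `z + t` is invertible for every scalar
`t`; `M ↦ (z + t) M` preserves singularity, and averaging `ψ (tr ((z + t) M))` over `t` cuts out
`tr M = 0`. Hence `S₁ = ∑ ψ (tr M) = 0` and `S₂ = S₃ = ∑_{det M = 0} ψ (tr M) = -q`.
-/

open Finset Matrix

lemma sum_matrix_fin_two {α β : Type*} [Fintype α] [AddCommMonoid β]
    (g : Matrix (Fin 2) (Fin 2) α → β) :
    ∑ M, g M = ∑ a, ∑ b, ∑ c, ∑ d, g !![a, b; c, d] := by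
  rw [← ((Matrix.of.symm.trans (finTwoArrowEquiv _)).trans
    ((finTwoArrowEquiv α).prodCongr (finTwoArrowEquiv α))).symm.sum_comp]
  simp only [Fintype.sum_prod_type]
  rfl

section Field

variable {F : Type} [Field F]

lemma det_add_smul_one (A : Matrix (Fin 2) (Fin 2) F) (x : F) :
    (A + x • 1).det = A.det + x * A.trace + x ^ 2 := by
  simp only [det_fin_two, trace_fin_two, Matrix.add_apply, Matrix.smul_apply, one_apply_eq,
    one_apply_ne (show (0 : Fin 2) ≠ 1 by decide), one_apply_ne (show (1 : Fin 2) ≠ 0 by decide),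
    smul_eq_mul]
  ring

open Polynomial in
lemma irreducible_charpoly_iff_not_isSquare {A : Matrix (Fin 2) (Fin 2) F} (hA : A.trace = 0) :
    Irreducible A.charpoly ↔ ¬IsSquare (-A.det) := by
  rw [charpoly_fin_two, hA, map_zero, zero_mul, sub_zero, ← sub_neg_eq_add, ← map_neg,
    X_pow_sub_C_irreducible_iff_of_prime Nat.prime_two]
  simp [IsSquare, sq, eq_comm]

lemma isUnit_add_smul_one_of_irreducible_charpoly {A : Matrix (Fin 2) (Fin 2) F}
    (hA : A.trace = 0) (hirr : Irreducible A.charpoly) (t : F) : IsUnit (A + t • 1) := by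
  rw [isUnit_iff_isUnit_det, isUnit_iff_ne_zero, det_add_smul_one, hA, mul_zero, add_zero]
  intro h
  exact (irreducible_charpoly_iff_not_isSquare hA).mp hirr ⟨t, by linear_combination -h⟩

end Field

section FiniteField

variable {F : Type} [Field F] [Fintype F] {n : Type} [Fintype n] [DecidableEq n] (ψ : AddChar F ℂ)

lemma ringChar_ne_two_of_odd_card (hF : Odd (Fintype.card F)) : ringChar F ≠ 2 := fun h => by
  have := FiniteField.even_card_of_char_two h
  rw [Nat.odd_iff] at hF
  omega

lemma sum_mul_addChar_trace_mul_of_isUnit {A : Matrix n n F} (hA : IsUnit A)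
    (f : Matrix n n F → ℂ) (hf : ∀ M, f (A * M) = f M) :
    ∑ M, f M * ψ (A * M).trace = ∑ M, f M * ψ M.trace :=
  calc ∑ M, f M * ψ (A * M).trace = ∑ M, f (A * M) * ψ (A * M).trace := by simp only [hf]
    _ = _ := Fintype.sum_equiv (Units.mulLeft hA.unit) _ _ fun _ => rfl

lemma sum_addChar_trace_eq_zero [Nonempty n] (hψ : ψ ≠ 1) :
    ∑ M : Matrix n n F, ψ M.trace = 0 := by
  refine AddChar.sum_eq_zero_of_ne_one (ψ := ψ.compAddMonoidHom (traceAddMonoidHom n F)) ?_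
  obtain ⟨x, hx⟩ := AddChar.ne_one_iff.mp hψ
  obtain ⟨i⟩ := ‹Nonempty n›
  exact AddChar.ne_one_iff.mpr ⟨single i i x, by simpa using hx⟩

variable [DecidableEq F]

lemma sum_ite_trace_eq_zero_mul_addChar (hψ : ψ ≠ 1) {z : Matrix n n F}
    (hz : ∀ t : F, IsUnit (z + t • 1)) (f : Matrix n n F → ℂ)
    (hf : ∀ A : Matrix n n F, IsUnit A → ∀ M, f (A * M) = f M) :
    ∑ M, (if M.trace = 0 then f M else 0) * ψ (z * M).trace = ∑ M, f M * ψ M.trace := by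
  have hq : (Fintype.card F : ℂ) ≠ 0 := by exact_mod_cast Fintype.card_ne_zero
  have hshift (t : F) (M : Matrix n n F) :
      ψ ((z + t • 1) * M).trace = ψ (z * M).trace * ψ (t * M.trace) := by
    rw [add_mul, smul_mul, one_mul, trace_add, trace_smul, smul_eq_mul, AddChar.map_add_eq_mul]
  apply mul_left_cancel₀ hq
  calc (Fintype.card F : ℂ) * ∑ M, (if M.trace = 0 then f M else 0) * ψ (z * M).trace
      = ∑ M, f M * ψ (z * M).trace * ∑ t : F, ψ (t * M.trace) := by
        rw [mul_sum]
        refine sum_congr rfl fun M _ => ?_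
        rw [AddChar.sum_mulShift _ (AddChar.IsPrimitive.of_ne_one hψ)]
        split_ifs <;> simp [mul_comm]
    _ = ∑ t : F, ∑ M, f M * ψ ((z + t • 1) * M).trace := by
        simp only [mul_sum, hshift, mul_assoc]
        exact sum_comm
    _ = (Fintype.card F : ℂ) * ∑ M, f M * ψ M.trace := by
        simp only [sum_mul_addChar_trace_mul_of_isUnit ψ (hz _) f (hf _ (hz _)), sum_const,
          card_univ, nsmul_eq_mul]

lemma sum_ite_trace_eq_zero_sum_add_smul_one {β : Type*} [AddCommMonoid β]
    (hn : (Fintype.card n : F) ≠ 0) (h : Matrix n n F → β) :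
    ∑ e : Matrix n n F, (if e.trace = 0 then ∑ x : F, h (e + x • 1) else 0) = ∑ M, h M := by
  have htrace (M : Matrix n n F) (x : F) :
      (M - x • 1).trace = 0 ↔ x = M.trace / Fintype.card n := by
    rw [trace_sub, trace_smul, trace_one, smul_eq_mul, eq_div_iff hn, sub_eq_zero, eq_comm]
  calc ∑ e : Matrix n n F, (if e.trace = 0 then ∑ x : F, h (e + x • 1) else 0)
      = ∑ x : F, ∑ e : Matrix n n F, if e.trace = 0 then h (e + x • 1) else 0 := by
        rw [sum_comm]
        refine sum_congr rfl fun e _ => ?_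
        split_ifs <;> simp
    _ = ∑ x : F, ∑ M : Matrix n n F, if (M - x • 1).trace = 0 then h M else 0 :=
        sum_congr rfl fun x _ => Fintype.sum_equiv (Equiv.addRight (x • 1)) _ _ fun e => by simp
    _ = ∑ M, h M := by
        rw [sum_comm]
        simp only [htrace, sum_ite_eq', mem_univ, if_true]

lemma sum_ite_mul_eq_zero_mul_addChar (hψ : ψ ≠ 1) :
    ∑ a, ∑ d, (if a * d = 0 then 1 else 0) * (ψ a * ψ d) = -1 := by
  have hψ0 := AddChar.sum_eq_zero_of_ne_one hψ
  have hd (a : F) :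
      ∑ d, (if a * d = 0 then 1 else 0) * (ψ a * ψ d) = if a = 0 then 0 else ψ a := by
    by_cases ha : a = 0
    · simp [ha, hψ0]
    · simp [ha]
  rw [sum_congr rfl fun a _ => hd a, sum_ite, sum_const_zero, zero_add, filter_ne',
    sum_erase_eq_sub (mem_univ 0), hψ0, AddChar.map_zero_eq_one, zero_sub]

lemma sum_ite_det_eq_zero_mul_addChar_trace (hψ : ψ ≠ 1) :
    ∑ M : Matrix (Fin 2) (Fin 2) F, (if M.det = 0 then 1 else 0) * ψ M.trace =
      -Fintype.card F := by
  have hψ0 := AddChar.sum_eq_zero_of_ne_one hψ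
  have hsolve {b : F} (hb : b ≠ 0) (a d : F) :
      ∑ c, (if a * d - b * c = 0 then 1 else 0) * ψ (a + d) = ψ (a + d) := by
    have hc (c : F) : a * d - b * c = 0 ↔ c = a * d / b := by
      rw [eq_div_iff hb, sub_eq_zero, eq_comm, mul_comm]
    simp [hc]
  rw [sum_matrix_fin_two, sum_comm, sum_eq_single (0 : F)]
  · simp only [det_fin_two_of, trace_fin_two_of, zero_mul, sub_zero, sum_const, card_univ,
      nsmul_eq_mul, AddChar.map_add_eq_mul]
    rw [← mul_neg_one, ← sum_ite_mul_eq_zero_mul_addChar ψ hψ, mul_sum]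
  · intro b _ hb
    refine sum_eq_zero fun a _ => ?_
    simp only [det_fin_two_of, trace_fin_two_of]
    rw [sum_comm, sum_congr rfl fun d _ => hsolve hb a d]
    simp only [AddChar.map_add_eq_mul, ← mul_sum, hψ0, mul_zero]
  · simp

lemma ite_isSquare_eq (hF : ringChar F ≠ 2) (u : F) :
    (if IsSquare u then 0 else 2 : ℂ) =
      2 - ∑ x : F, (if x ^ 2 = u then 1 else 0) - if u = 0 then 1 else 0 := by
  have hcard : ∑ x : F, (if x ^ 2 = u then 1 else 0 : ℂ) = quadraticChar F u + 1 := by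
    rw [sum_boole]
    exact_mod_cast congrArg (Int.cast : ℤ → ℂ) (by simpa using quadraticChar_card_sqrts hF u)
  rw [hcard]
  by_cases hu : u = 0
  · norm_num [hu]
  by_cases hsq : IsSquare u
  · norm_num [hu, hsq, (quadraticChar_one_iff_isSquare hu).mpr hsq]
  · norm_num [hu, hsq, quadraticChar_neg_one_iff_not_isSquare.mpr hsq]

lemma ite_irreducible_charpoly_eq (hF : ringChar F ≠ 2) {e : Matrix (Fin 2) (Fin 2) F}
    (he : e.trace = 0) :
    (if Irreducible e.charpoly then 2 else 0 : ℂ) =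
      2 - ∑ x : F, (if (e + x • 1).det = 0 then 1 else 0) - if e.det = 0 then 1 else 0 := by
  have hdet (x : F) : (e + x • 1).det = 0 ↔ x ^ 2 = -e.det := by
    rw [det_add_smul_one, he, mul_zero, add_zero, add_comm, add_eq_zero_iff_eq_neg]
  simp only [irreducible_charpoly_iff_not_isSquare he, hdet, ← neg_eq_zero (a := e.det)]
  rw [← ite_isSquare_eq hF, ite_not]

lemma ite_trace_eq_zero_and_irreducible_mul_two (hF : ringChar F ≠ 2)
    {z : Matrix (Fin 2) (Fin 2) F} (hz : z.trace = 0) (e : Matrix (Fin 2) (Fin 2) F) :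
    (if e.trace = 0 ∧ Irreducible e.charpoly then ψ (z * e).trace else 0) * 2 =
      2 * ((if e.trace = 0 then 1 else 0) * ψ (z * e).trace)
      - (if e.trace = 0 then
          ∑ x : F, (if (e + x • 1).det = 0 then 1 else 0) * ψ (z * (e + x • 1)).trace else 0)
      - (if e.trace = 0 then (if e.det = 0 then 1 else 0) else 0) * ψ (z * e).trace := by
  by_cases he : e.trace = 0
  · have htr (x : F) : (z * (e + x • 1)).trace = (z * e).trace := by
      rw [mul_add, trace_add, mul_smul_comm, mul_one, trace_smul, hz, smul_zero, add_zero]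
    simp only [he, true_and, if_true, htr, ← sum_mul]
    rw [show ∀ a : ℂ, (if Irreducible e.charpoly then a else 0) * 2 =
        (if Irreducible e.charpoly then 2 else 0) * a from fun a => by split_ifs <;> ring,
      ite_irreducible_charpoly_eq hF he]
    ring
  · simp [he]

end FiniteField

/-- For `q` a power of an odd prime, `ψ` a nontrivial additive character of `𝔽_q`,
and `z ∈ sl(2,𝔽_q)` elliptic (trace zero with irreducible characteristic polynomial),
the sum of `ψ(trace (z * e))` over all elliptic `e ∈ sl(2,𝔽_q)` equals `q`. -/
theorem sum_additive_character_over_elliptic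
    (q : ℕ) (hq : Odd q)
    (F : Type) [Field F] [Fintype F] [DecidableEq F] (hcard : Fintype.card F = q)
    (ψ : AddChar F ℂ) (hψ : ψ ≠ 1)
    (z : Matrix (Fin 2) (Fin 2) F) (hz : z.trace = 0) (hzell : Irreducible z.charpoly) :
    ∑ e : Matrix (Fin 2) (Fin 2) F,
      (if e.trace = 0 ∧ Irreducible e.charpoly then ψ (z * e).trace else 0) = q := by
  subst hcard
  have hF := ringChar_ne_two_of_odd_card hq
  have hunit := isUnit_add_smul_one_of_irreducible_charpoly hz hzell
  have hz_unit : IsUnit z := by simpa using hunit 0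
  have hdet (A : Matrix (Fin 2) (Fin 2) F) (hA : IsUnit A) (M : Matrix (Fin 2) (Fin 2) F) :
      (if (A * M).det = 0 then 1 else 0 : ℂ) = if M.det = 0 then 1 else 0 := by
    simp [det_mul, ((isUnit_iff_isUnit_det A).mp hA).ne_zero]
  have hfull : ∑ M : Matrix (Fin 2) (Fin 2) F,
      (if M.trace = 0 then 1 else 0) * ψ (z * M).trace = 0 :=
    (sum_ite_trace_eq_zero_mul_addChar ψ hψ hunit (fun _ => 1) fun _ _ _ => rfl).trans
      (by simpa using sum_addChar_trace_eq_zero ψ hψ)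
  have hsingular := (sum_ite_trace_eq_zero_sum_add_smul_one (by simpa using Ring.two_ne_zero hF)
    fun M => (if M.det = 0 then 1 else 0) * ψ (z * M).trace).trans <|
      (sum_mul_addChar_trace_mul_of_isUnit ψ hz_unit _ (hdet z hz_unit)).trans
        (sum_ite_det_eq_zero_mul_addChar_trace ψ hψ)
  have hnilpotent := (sum_ite_trace_eq_zero_mul_addChar ψ hψ hunit _ hdet).trans
    (sum_ite_det_eq_zero_mul_addChar_trace ψ hψ)
  apply mul_right_cancel₀ (two_ne_zero (α := ℂ))
  rw [sum_mul, sum_congr rfl fun e _ => ite_trace_eq_zero_and_irreducible_mul_two ψ hF hz e,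
    sum_sub_distrib, sum_sub_distrib, ← mul_sum, hfull, hsingular, hnilpotent]
  ring
end

section
/- Let q be a power of an odd prime. For a ∈ 𝔽_q^× and b ∈ 𝔽_q write g_{a,b} for the matrix [[a, b], [0, 1]] ∈ GL(2,𝔽_q), and for u ∈ 𝔽_q^× write Z_u for the matrix [[0, 1], [u, 0]] ∈ sl(2,𝔽_q). Then the map (u, a, b) ↦ g_{a,b} · Z_u · g_{a,b}^{-1}, defined on triples with u a non-square in 𝔽_q^×, a ∈ 𝔽_q^×, and b ∈ 𝔽_q, is a bijection onto the set of elliptic elements of sl(2,𝔽_q). -/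
/-!
Conjugating `Z_u = !![0, 1; u, 0]` by `g_{a,b}` gives the explicit traceless matrix
`!![b u / a, a - b² u / a; u / a, -(b u / a)]` of determinant `-u`. A traceless `2 × 2` matrix
`X` has characteristic polynomial `T² + det X`, which is irreducible exactly when `-det X` is not
a square; so the image consists of elliptic elements. Conversely `u = -det X`, `a = u / X₁₀` and
`b = X₀₀ / X₁₀` are read off from `X`, which gives injectivity, and for an elliptic
`X = !![x, y; z, -x]` we have `z ≠ 0` (otherwise `-det X = x²`), so these values give a preimage.
-/

open Polynomial Matrix

theorem Units.isSquare_val_iff {G₀ : Type*} [GroupWithZero G₀] (u : G₀ˣ) :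
    IsSquare (u : G₀) ↔ IsSquare u := by
  refine ⟨fun ⟨r, hr⟩ => ?_, fun h => h.map (Units.coeHom G₀)⟩
  have hr0 : r ≠ 0 := by rintro rfl; exact u.ne_zero (by simp at hr)
  exact ⟨Units.mk0 r hr0, Units.ext (by simpa using hr)⟩

variable {K : Type*} [Field K]

namespace Matrix

theorem exists_eq_of_trace_eq_zero {M : Matrix (Fin 2) (Fin 2) K} (htr : M.trace = 0) :
    ∃ x y z, M = !![x, y; z, -x] := by
  have hd : M 1 1 = -M 0 0 := by rw [trace_fin_two] at htr; linear_combination htr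
  exact ⟨M 0 0, M 0 1, M 1 0, hd ▸ eta_fin_two M⟩

theorem irreducible_charpoly_iff_of_trace_eq_zero {M : Matrix (Fin 2) (Fin 2) K}
    (htr : M.trace = 0) : Irreducible M.charpoly ↔ ¬IsSquare (-M.det) := by
  rw [charpoly_fin_two, htr, map_zero, zero_mul, sub_zero, ← sub_neg_eq_add, ← map_neg,
    X_pow_sub_C_irreducible_iff_of_prime Nat.prime_two, isSquare_iff_exists_sq]
  simp only [not_exists, ne_eq, eq_comm]

end Matrix

noncomputable def affineConj (u a b : K) : Matrix (Fin 2) (Fin 2) K :=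
  !![a, b; 0, 1] * !![0, 1; u, 0] * (!![a, b; 0, 1])⁻¹

section affineConj

variable {u a b : K}

theorem affineConj_eq (ha : a ≠ 0) :
    affineConj u a b = !![b * u / a, a - b ^ 2 * u / a; u / a, -(b * u / a)] := by
  have : Invertible !![a, b; 0, 1] := invertibleOfLeftInverse _ !![a⁻¹, -b / a; 0, 1] <| by
    ext i j; fin_cases i <;> fin_cases j <;> simp [field]
  rw [affineConj, mul_inv_eq_iff_eq_mul_of_invertible]
  ext i j; fin_cases i <;> fin_cases j <;> simp [field]

theorem trace_affineConj (ha : a ≠ 0) : (affineConj u a b).trace = 0 := by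
  rw [affineConj_eq ha, trace_fin_two_of, add_neg_cancel]

theorem det_affineConj (ha : a ≠ 0) : (affineConj u a b).det = -u := by
  rw [affineConj_eq ha, det_fin_two_of]
  field_simp
  ring

theorem eq_of_affineConj_eq {u' a' b' : K} (ha : a ≠ 0) (ha' : a' ≠ 0) (hu : u ≠ 0)
    (h : affineConj u a b = affineConj u' a' b') : u = u' ∧ a = a' ∧ b = b' := by
  obtain rfl : u = u' := by
    simpa [det_affineConj ha, det_affineConj ha'] using congrArg det h
  rw [affineConj_eq ha, affineConj_eq ha'] at h
  obtain rfl : a = a' := by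
    simpa [div_eq_mul_inv, hu] using congrFun₂ h 1 0
  exact ⟨rfl, rfl, by simpa [ha, hu] using congrFun₂ h 0 0⟩

theorem affineConj_eq_traceless_matrix {x y z : K} (hu : x ^ 2 + y * z ≠ 0) (hz : z ≠ 0) :
    affineConj (x ^ 2 + y * z) ((x ^ 2 + y * z) / z) (x / z) = !![x, y; z, -x] := by
  rw [affineConj_eq (div_ne_zero hu hz)]
  generalize hu' : x ^ 2 + y * z = u at hu
  ext i j; fin_cases i <;> fin_cases j <;> simp [field]
  linear_combination -hu'

theorem exists_affineConj_eq {X : Matrix (Fin 2) (Fin 2) K} (htr : X.trace = 0)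
    (hX : ¬IsSquare (-X.det)) : ∃ u a b, a ≠ 0 ∧ ¬IsSquare u ∧ affineConj u a b = X := by
  obtain ⟨x, y, z, rfl⟩ := exists_eq_of_trace_eq_zero htr
  have hdet : -det !![x, y; z, -x] = x ^ 2 + y * z := by rw [det_fin_two_of]; ring
  rw [hdet] at hX
  have hu : x ^ 2 + y * z ≠ 0 := fun h => hX (h ▸ IsSquare.zero)
  have hz : z ≠ 0 := by rintro rfl; exact hX ⟨x, by ring⟩
  exact ⟨_, _, _, div_ne_zero hu hz, hX, affineConj_eq_traceless_matrix hu hz⟩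

end affineConj

theorem elliptic_parametrization_bijOn_general
    (F : Type) [Field F] :
    Set.BijOn
      (fun t : Fˣ × Fˣ × F =>
        (!![((t.2.1 : F)), t.2.2; 0, 1] : Matrix (Fin 2) (Fin 2) F) *
          (!![0, 1; ((t.1 : F)), 0] : Matrix (Fin 2) (Fin 2) F) *
          (!![((t.2.1 : F)), t.2.2; 0, 1] : Matrix (Fin 2) (Fin 2) F)⁻¹)
      {t : Fˣ × Fˣ × F | ¬ IsSquare t.1}
      {X : Matrix (Fin 2) (Fin 2) F | X.trace = 0 ∧ Irreducible X.charpoly} := by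
  refine ⟨?_, ?_, ?_⟩
  · rintro ⟨u, a, b⟩ hu
    have htr := trace_affineConj (u := (u : F)) (b := b) a.ne_zero
    refine ⟨htr, (irreducible_charpoly_iff_of_trace_eq_zero htr).2 ?_⟩
    rwa [det_affineConj a.ne_zero, neg_neg, Units.isSquare_val_iff]
  · rintro ⟨u, a, b⟩ - ⟨u', a', b'⟩ - h
    obtain ⟨hu, ha, rfl⟩ := eq_of_affineConj_eq a.ne_zero a'.ne_zero u.ne_zero h
    exact Prod.ext (Units.ext hu) (Prod.ext (Units.ext ha) rfl)
  · rintro X ⟨htr, hirr⟩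
    obtain ⟨u, a, b, ha, hu, rfl⟩ :=
      exists_affineConj_eq htr ((irreducible_charpoly_iff_of_trace_eq_zero htr).1 hirr)
    have hu0 : u ≠ 0 := fun h => hu (h ▸ IsSquare.zero)
    refine ⟨(Units.mk0 u hu0, Units.mk0 a ha, b), ?_, rfl⟩
    exact fun h => hu ((Units.isSquare_val_iff _).2 h)

/-- For `q` a power of an odd prime, the map
`(u, a, b) ↦ g_{a,b} · Z_u · g_{a,b}⁻¹`, where `g_{a,b} = !![a, b; 0, 1]` and
`Z_u = !![0, 1; u, 0]`, restricted to triples with `u` a non-square unit,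
`a` a unit and `b` arbitrary, is a bijection onto the set of elliptic elements
of `sl(2,𝔽_q)` (trace-zero matrices with irreducible characteristic polynomial). -/
theorem elliptic_parametrization_bijOn
    (q : ℕ) (hq : Odd q)
    (F : Type) [Field F] [Fintype F] [DecidableEq F] (hcard : Fintype.card F = q) :
    Set.BijOn
      (fun t : Fˣ × Fˣ × F =>
        (!![((t.2.1 : F)), t.2.2; 0, 1] : Matrix (Fin 2) (Fin 2) F) *
          (!![0, 1; ((t.1 : F)), 0] : Matrix (Fin 2) (Fin 2) F) *
          (!![((t.2.1 : F)), t.2.2; 0, 1] : Matrix (Fin 2) (Fin 2) F)⁻¹)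
      {t : Fˣ × Fˣ × F | ¬ IsSquare t.1}
      {X : Matrix (Fin 2) (Fin 2) F | X.trace = 0 ∧ Irreducible X.charpoly} :=
  elliptic_parametrization_bijOn_general F
end

section
/- Let q be a power of an odd prime. Under the adjoint (conjugation) action of SL(2,𝔽_q) on sl(2,𝔽_q), the set of elliptic elements decomposes into exactly (q−1)/2 orbits, and each of these orbits contains exactly (q−1)·q elements. -/
/-!
The stabiliser of an elliptic `X` in `SL(2, 𝔽_q)` consists of the `u • 1 + v • X` with
`u ^ 2 + det X * v ^ 2 = 1`, the norm-one elements of `𝔽_q[X] ≅ 𝔽_{q²}`. This conic has `q + 1`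
points, so by orbit-stabiliser every elliptic orbit has `|SL(2, 𝔽_q)| / (q + 1) = (q - 1) q`
elements. An elliptic `!![a, b; c, -a]` is determined by `a`, `b ≠ 0` and the nonsquare
`-det = a ^ 2 + b c`, so there are `q (q - 1) (q - 1) / 2` of them, hence `(q - 1) / 2` orbits.
-/

open Matrix MulAction

theorem MulAction.card_orbits_mul_eq_card {G α : Type*} [Group G] [MulAction G α] [Finite α]
    {P : α → Prop} (hP : ∀ (g : G) (x : α), P x → P (g • x)) {n : ℕ}
    (hn : ∀ x, P x → Nat.card (orbit G x) = n) :
    Nat.card {S : Set α // ∃ x, P x ∧ S = orbit G x} * n = Nat.card {x // P x} := by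
  let f : {x // P x} → {S : Set α // ∃ x, P x ∧ S = orbit G x} :=
    fun x => ⟨orbit G x, x, x.2, rfl⟩
  have hfiber (S : {S : Set α // ∃ x, P x ∧ S = orbit G x}) :
      Nat.card {x // f x = S} = n := by
    obtain ⟨_, y, hy, rfl⟩ := S
    have hmem : ∀ {x}, x ∈ orbit G y → P x := by
      rintro _ ⟨g, rfl⟩; exact hP g y hy
    rw [← hn y hy, ← Nat.card_congr (Equiv.subtypeSubtypeEquivSubtype hmem)]
    exact Nat.card_congr (Equiv.subtypeEquivRight fun x => by simp [f, orbit_eq_iff])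
  have := Fintype.ofFinite {S : Set α // ∃ x, P x ∧ S = orbit G x}
  rw [← Nat.card_congr (Equiv.sigmaFiberEquiv f), Nat.card_sigma]
  simp [hfiber, mul_comm]

namespace Matrix.SpecialLinearGroup

variable {n R : Type*} [Fintype n] [DecidableEq n] [CommRing R]

theorem coe_inv_mul_coe (g : SpecialLinearGroup n R) :
    ((g⁻¹ : SpecialLinearGroup n R) : Matrix n n R) * g = 1 := by
  rw [← coe_mul, inv_mul_cancel, coe_one]

theorem coe_mul_coe_inv (g : SpecialLinearGroup n R) :
    (g : Matrix n n R) * (g⁻¹ : SpecialLinearGroup n R) = 1 := by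
  rw [← coe_mul, mul_inv_cancel, coe_one]

/-- Only a local instance: `SL n R` also acts on matrices by left multiplication. -/
abbrev conjMulAction : MulAction (SpecialLinearGroup n R) (Matrix n n R) where
  smul g X := g * X * (g⁻¹ : SpecialLinearGroup n R)
  one_smul X := by
    change ((1 : SpecialLinearGroup n R) : Matrix n n R) * X *
      ((1⁻¹ : SpecialLinearGroup n R) : Matrix n n R) = X
    rw [inv_one, coe_one, Matrix.mul_one, Matrix.one_mul]
  mul_smul g h X := by
    change ((g * h : SpecialLinearGroup n R) : Matrix n n R) * X *
        ((g * h)⁻¹ : SpecialLinearGroup n R) =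
      g * (h * X * (h⁻¹ : SpecialLinearGroup n R)) * (g⁻¹ : SpecialLinearGroup n R)
    rw [_root_.mul_inv_rev, coe_mul, coe_mul]
    noncomm_ring

attribute [local instance] conjMulAction

theorem conj_smul_def (g : SpecialLinearGroup n R) (X : Matrix n n R) :
    g • X = g * X * (g⁻¹ : SpecialLinearGroup n R) := rfl

theorem setOf_conj_eq_orbit (X : Matrix n n R) :
    {Y | ∃ g : SpecialLinearGroup n R, Y = g * X * (g⁻¹ : SpecialLinearGroup n R)} =
      orbit (SpecialLinearGroup n R) X := by
  ext Y
  simp only [Set.mem_ofPred_eq, mem_orbit_iff, conj_smul_def, eq_comm]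

theorem mem_stabilizer_conj_iff {g : SpecialLinearGroup n R} {X : Matrix n n R} :
    g ∈ stabilizer _ X ↔ Commute (g : Matrix n n R) X := by
  rw [mem_stabilizer_iff, conj_smul_def, Commute, SemiconjBy]
  constructor
  · intro h
    conv_rhs => rw [← h]
    rw [Matrix.mul_assoc _ _ (g : Matrix n n R), coe_inv_mul_coe, Matrix.mul_one]
  · intro h
    rw [h, Matrix.mul_assoc, coe_mul_coe_inv, Matrix.mul_one]

theorem trace_conj_smul (g : SpecialLinearGroup n R) (X : Matrix n n R) :
    (g • X).trace = X.trace := by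
  rw [conj_smul_def, trace_mul_cycle, coe_inv_mul_coe, Matrix.one_mul]

theorem charpoly_conj_smul (g : SpecialLinearGroup n R) (X : Matrix n n R) :
    (g • X).charpoly = X.charpoly := by
  rw [conj_smul_def, charpoly_mul_comm, ← Matrix.mul_assoc, coe_inv_mul_coe, Matrix.one_mul]

theorem card_mul_card_units [Nonempty n] :
    Nat.card (SpecialLinearGroup n R) * Nat.card Rˣ = Nat.card (GL n R) := by
  let e : SpecialLinearGroup n R ≃ GeneralLinearGroup.det.ker :=
    { toFun g := ⟨toGL g, Units.ext g.2⟩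
      invFun g := ⟨g.1, congrArg Units.val g.2⟩
      left_inv _ := rfl
      right_inv _ := by ext; rfl }
  rw [Subgroup.card_eq_card_quotient_mul_card_subgroup GeneralLinearGroup.det.ker,
    Nat.card_congr (QuotientGroup.quotientKerEquivOfSurjective _
      GeneralLinearGroup.det_surjective).toEquiv,
    Nat.card_congr e, mul_comm]

end Matrix.SpecialLinearGroup

attribute [local instance] Matrix.SpecialLinearGroup.conjMulAction

theorem FiniteField.two_mul_card_not_isSquare {F : Type*} [Field F] [Fintype F] [DecidableEq F]
    (hF : ringChar F ≠ 2) :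
    2 * Nat.card {a : F // ¬IsSquare a} = Fintype.card F - 1 := by
  obtain ⟨u, hu⟩ := FiniteField.exists_nonsquare hF
  have hu0 : u ≠ 0 := by rintro rfl; exact hu IsSquare.zero
  have hswap (a : F) : ¬IsSquare a ↔ u * a ≠ 0 ∧ IsSquare (u * a) := by
    rcases eq_or_ne a 0 with rfl | ha
    · simp
    have hua := mul_ne_zero hu0 ha
    rw [← quadraticChar_neg_one_iff_not_isSquare, ← quadraticChar_one_iff_isSquare hua,
      map_mul, quadraticChar_neg_one_iff_not_isSquare.2 hu, neg_one_mul, neg_eq_iff_eq_neg,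
      and_iff_right hua]
  have hnonsq : Nat.card {a : F // ¬IsSquare a} = Nat.card {a : F // a ≠ 0 ∧ IsSquare a} :=
    Nat.card_congr ((Equiv.mulLeft₀ u hu0).subtypeEquiv hswap)
  have hsplit : Nat.card {a : F // a ≠ 0 ∧ IsSquare a} + Nat.card {a : F // ¬IsSquare a} =
      Fintype.card F - 1 := by
    let p : F → Prop := (· ≠ 0)
    rw [← Nat.card_congr (Equiv.subtypeSubtypeEquivSubtypeInter p IsSquare),
      ← Nat.card_congr (Equiv.subtypeSubtypeEquivSubtype (p := p) (q := fun a => ¬IsSquare a)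
        fun h h0 => h (h0 ▸ IsSquare.zero)),
      ← Nat.card_sum, Nat.card_congr (Equiv.sumCompl _), Nat.card_eq_fintype_card,
      Fintype.card_subtype_compl, Fintype.card_subtype_eq]
  omega

section Field

variable {F : Type*} [Field F]

theorem one_sub_mul_sq_ne_zero {s : F} (hs : ¬IsSquare s) (t : F) : 1 - s * t ^ 2 ≠ 0 := by
  intro h
  have ht : t ≠ 0 := by rintro rfl; simp at h
  exact hs ⟨t⁻¹, by field_simp; linear_combination -h⟩

/-- Stereographic projection from `(-1, 0)`, which is the image of `none`. -/
def optionEquivPellConic [DecidableEq F] {s : F} (hs : ¬IsSquare s) (h2 : (2 : F) ≠ 0) :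
    Option F ≃ {p : F × F // p.1 ^ 2 - s * p.2 ^ 2 = 1} where
  toFun
    | none => ⟨(-1, 0), by ring⟩
    | some t => ⟨((1 + s * t ^ 2) / (1 - s * t ^ 2), 2 * t / (1 - s * t ^ 2)), by
        have := one_sub_mul_sq_ne_zero hs t
        field_simp
        ring⟩
  invFun p := if p.1.1 = -1 then none else some (p.1.2 / (p.1.1 + 1))
  left_inv
    | none => by simp
    | some t => by
        have := one_sub_mul_sq_ne_zero hs t
        have hne : (1 + s * t ^ 2) / (1 - s * t ^ 2) ≠ -1 := by
          rw [Ne, div_eq_iff this]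
          intro h
          exact h2 (by linear_combination h)
        simp only [hne, if_false, Option.some.injEq]
        rw [div_add_one this, div_div_div_cancel_right₀ this,
          show 1 + s * t ^ 2 + (1 - s * t ^ 2) = 2 by ring, mul_div_cancel_left₀ t h2]
  right_inv := by
    rintro ⟨⟨u, v⟩, hp⟩
    dsimp only at hp
    by_cases hu : u = -1
    · have hs0 : s ≠ 0 := by rintro rfl; exact hs IsSquare.zero
      have hv : v = 0 := by
        subst hu
        exact pow_eq_zero_iff two_ne_zero |>.1 <|
          (mul_eq_zero.1 (by linear_combination -hp)).resolve_left hs0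
      simp [hu, hv]
    · have hu1 : u + 1 ≠ 0 := fun h => hu (by linear_combination h)
      have hsub : 1 - s * (v / (u + 1)) ^ 2 = 2 / (u + 1) := by
        field_simp
        linear_combination hp
      have hadd : 1 + s * (v / (u + 1)) ^ 2 = 2 * u / (u + 1) := by
        field_simp
        linear_combination -hp
      simp only [hu, if_false, Subtype.mk.injEq, Prod.mk.injEq, hsub, hadd]
      constructor <;> field_simp

theorem Matrix.det_smul_one_add_smul {R : Type*} [CommRing R] (X : Matrix (Fin 2) (Fin 2) R)
    (u v : R) : (u • 1 + v • X).det = u ^ 2 + u * v * X.trace + v ^ 2 * X.det := by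
  simp only [det_fin_two, trace_fin_two, Matrix.add_apply, Matrix.smul_apply, one_apply_eq,
    one_apply_ne zero_ne_one, one_apply_ne one_ne_zero, smul_eq_mul]
  ring

theorem Matrix.eq_smul_one_add_smul_of_commute {X A : Matrix (Fin 2) (Fin 2) F}
    (hX : X 0 1 ≠ 0) (h : Commute A X) :
    A = (A 0 0 - A 0 1 / X 0 1 * X 0 0) • 1 + (A 0 1 / X 0 1) • X := by
  have h00 := congrFun (congrFun h 0) 0
  have h01 := congrFun (congrFun h 0) 1
  simp only [mul_apply, Fin.sum_univ_two] at h00 h01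
  ext i j
  fin_cases i <;> fin_cases j <;>
    simp only [Fin.zero_eta, Fin.mk_one, Matrix.add_apply, Matrix.smul_apply, one_apply_eq,
      one_apply_ne zero_ne_one, one_apply_ne one_ne_zero, smul_eq_mul, mul_one, mul_zero,
      zero_add, sub_add_cancel] <;>
    field_simp
  · linear_combination -h00
  · linear_combination -h01

def stabilizerEquivPellConic {X : Matrix (Fin 2) (Fin 2) F} (htr : X.trace = 0) (hX : X 0 1 ≠ 0) :
    stabilizer (SpecialLinearGroup (Fin 2) F) X ≃
      {p : F × F // p.1 ^ 2 - (-X.det) * p.2 ^ 2 = 1} where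
  toFun g := ⟨(g.1 0 0 - g.1 0 1 / X 0 1 * X 0 0, g.1 0 1 / X 0 1), by
    have hdet : (g.1 : Matrix (Fin 2) (Fin 2) F).det = 1 := g.1.2
    rw [eq_smul_one_add_smul_of_commute hX (SpecialLinearGroup.mem_stabilizer_conj_iff.1 g.2),
      det_smul_one_add_smul, htr] at hdet
    linear_combination hdet⟩
  invFun p := ⟨⟨p.1.1 • 1 + p.1.2 • X, by
      rw [det_smul_one_add_smul, htr]; linear_combination p.2⟩,
    SpecialLinearGroup.mem_stabilizer_conj_iff.2 <|
      ((Commute.one_left X).smul_left _).add_left ((Commute.refl X).smul_left _)⟩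
  left_inv g := Subtype.ext <| Subtype.ext
    (eq_smul_one_add_smul_of_commute hX (SpecialLinearGroup.mem_stabilizer_conj_iff.1 g.2)).symm
  right_inv p := by
    refine Subtype.ext (Prod.ext ?_ ?_) <;> simp [hX]

def IsEllipticSl2 (X : Matrix (Fin 2) (Fin 2) F) : Prop :=
  X.trace = 0 ∧ Irreducible X.charpoly

theorem isEllipticSl2_iff {X : Matrix (Fin 2) (Fin 2) F} :
    IsEllipticSl2 X ↔ X.trace = 0 ∧ ¬IsSquare (-X.det) := by
  refine and_congr_right fun htr => ?_
  rw [charpoly_fin_two, htr, map_zero, zero_mul, sub_zero, ← sub_neg_eq_add, ← map_neg,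
    X_pow_sub_C_irreducible_iff_of_prime Nat.prime_two]
  simp only [IsSquare, sq, ne_eq, not_exists, eq_comm]

theorem IsEllipticSl2.smul {X : Matrix (Fin 2) (Fin 2) F} (hX : IsEllipticSl2 X)
    (g : SpecialLinearGroup (Fin 2) F) : IsEllipticSl2 (g • X) := by
  rw [IsEllipticSl2, SpecialLinearGroup.trace_conj_smul, SpecialLinearGroup.charpoly_conj_smul]
  exact hX

theorem Matrix.neg_det_of_trace_eq_zero {X : Matrix (Fin 2) (Fin 2) F} (htr : X.trace = 0) :
    -X.det = X 0 0 ^ 2 + X 0 1 * X 1 0 := by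
  rw [trace_fin_two] at htr
  rw [det_fin_two, show X 1 1 = -X 0 0 by linear_combination htr]
  ring

theorem IsEllipticSl2.apply_zero_one_ne_zero {X : Matrix (Fin 2) (Fin 2) F}
    (hX : IsEllipticSl2 X) : X 0 1 ≠ 0 := by
  obtain ⟨htr, hsq⟩ := isEllipticSl2_iff.1 hX
  intro h
  exact hsq ⟨X 0 0, by rw [neg_det_of_trace_eq_zero htr, h]; ring⟩

theorem Matrix.neg_det_fin_two_of_sub_sq_div {a b s : F} (hb : b ≠ 0) :
    -!![a, b; (s - a ^ 2) / b, -a].det = s := by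
  rw [det_fin_two_of]
  field_simp
  ring

def ellipticSl2Equiv :
    {X : Matrix (Fin 2) (Fin 2) F // IsEllipticSl2 X} ≃
      F × {b : F // b ≠ 0} × {s : F // ¬IsSquare s} where
  toFun X := (X.1 0 0, ⟨X.1 0 1, X.2.apply_zero_one_ne_zero⟩,
    ⟨-X.1.det, (isEllipticSl2_iff.1 X.2).2⟩)
  invFun x := ⟨!![x.1, x.2.1; (x.2.2 - x.1 ^ 2) / x.2.1, -x.1], by
    obtain ⟨a, ⟨b, hb⟩, ⟨s, hs⟩⟩ := x
    refine isEllipticSl2_iff.2 ⟨by simp [trace_fin_two], ?_⟩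
    rwa [neg_det_fin_two_of_sub_sq_div hb]⟩
  left_inv X := by
    obtain ⟨X, hX⟩ := X
    have hb := hX.apply_zero_one_ne_zero
    have htr := (isEllipticSl2_iff.1 hX).1
    have hdet := neg_det_of_trace_eq_zero htr
    rw [trace_fin_two] at htr
    ext i j
    fin_cases i <;> fin_cases j <;>
      simp only [hdet, add_sub_cancel_left, Fin.zero_eta, Fin.mk_one, of_apply, cons_val',
        cons_val_zero, cons_val_one, cons_val_fin_one]
    · field_simp
    · linear_combination -htr
  right_inv x := by
    obtain ⟨a, ⟨b, hb⟩, ⟨s, hs⟩⟩ := x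
    exact Prod.ext rfl (Prod.ext rfl (Subtype.ext (neg_det_fin_two_of_sub_sq_div hb)))

variable [Fintype F] [DecidableEq F]

theorem card_isEllipticSl2 :
    Nat.card {X : Matrix (Fin 2) (Fin 2) F // IsEllipticSl2 X} =
      (Fintype.card F - 1) * Fintype.card F * Nat.card {s : F // ¬IsSquare s} := by
  rw [Nat.card_congr ellipticSl2Equiv, Nat.card_prod, Nat.card_prod,
    Nat.card_eq_fintype_card (α := F), Nat.card_eq_fintype_card (α := {b : F // b ≠ 0}),
    Fintype.card_subtype_compl, Fintype.card_subtype_eq]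
  ring

theorem IsEllipticSl2.card_stabilizer (hF : ringChar F ≠ 2) {X : Matrix (Fin 2) (Fin 2) F}
    (hX : IsEllipticSl2 X) :
    Nat.card (stabilizer (SpecialLinearGroup (Fin 2) F) X) = Fintype.card F + 1 := by
  obtain ⟨htr, hs⟩ := isEllipticSl2_iff.1 hX
  rw [Nat.card_congr (stabilizerEquivPellConic htr hX.apply_zero_one_ne_zero),
    ← Nat.card_congr (optionEquivPellConic hs (Ring.two_ne_zero hF)), Finite.card_option,
    Nat.card_eq_fintype_card]

theorem IsEllipticSl2.card_orbit (hF : ringChar F ≠ 2) {X : Matrix (Fin 2) (Fin 2) F}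
    (hX : IsEllipticSl2 X) :
    Nat.card (orbit (SpecialLinearGroup (Fin 2) F) X) =
      (Fintype.card F - 1) * Fintype.card F := by
  have hq : 1 < Fintype.card F := Fintype.one_lt_card
  have horbit := (stabilizer (SpecialLinearGroup (Fin 2) F) X).index_mul_card
  rw [index_stabilizer, ← Nat.card_coe_set_eq, hX.card_stabilizer hF] at horbit
  have hSL := SpecialLinearGroup.card_mul_card_units (n := Fin 2) (R := F)
  rw [Nat.card_units, Nat.card_eq_fintype_card (α := F), card_GL_field, Fin.prod_univ_two,
    Fin.val_zero, Fin.val_one, pow_zero, pow_one, ← horbit] at hSL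
  refine Nat.eq_of_mul_eq_mul_right
    (Nat.mul_pos (Fintype.card F).succ_pos (Nat.sub_pos_of_lt hq)) ?_
  rw [← mul_assoc, hSL]
  have : Fintype.card F ≤ Fintype.card F ^ 2 := Nat.le_self_pow two_ne_zero _
  zify [hq.le, hq.le.trans this, this]
  ring

end Field

/-- For `q` a power of an odd prime, under the conjugation action of `SL(2,𝔽_q)` on
`sl(2,𝔽_q)`, the set of elliptic elements (trace zero, irreducible characteristic
polynomial) decomposes into exactly `(q-1)/2` orbits, each of cardinality `(q-1)·q`. -/
theorem elliptic_orbit_count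
    (q : ℕ) (hq : Odd q)
    (F : Type) [Field F] [Fintype F] [DecidableEq F] (hcard : Fintype.card F = q) :
    Nat.card {S : Set (Matrix (Fin 2) (Fin 2) F) //
        ∃ X : Matrix (Fin 2) (Fin 2) F, X.trace = 0 ∧ Irreducible X.charpoly ∧
          S = {Y | ∃ g : Matrix.SpecialLinearGroup (Fin 2) F,
                Y = (g : Matrix (Fin 2) (Fin 2) F) * X * ((g⁻¹ : Matrix.SpecialLinearGroup (Fin 2) F) : Matrix (Fin 2) (Fin 2) F)}}
      = (q - 1) / 2
    ∧ ∀ X : Matrix (Fin 2) (Fin 2) F, X.trace = 0 → Irreducible X.charpoly →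
        Nat.card {Y : Matrix (Fin 2) (Fin 2) F |
            ∃ g : Matrix.SpecialLinearGroup (Fin 2) F,
              Y = (g : Matrix (Fin 2) (Fin 2) F) * X * ((g⁻¹ : Matrix.SpecialLinearGroup (Fin 2) F) : Matrix (Fin 2) (Fin 2) F)}
          = (q - 1) * q := by
  subst hcard
  have hF : ringChar F ≠ 2 := fun h =>
    Nat.not_even_iff_odd.2 hq (Nat.even_iff.2 (FiniteField.even_card_iff_char_two.1 h))
  simp_rw [SpecialLinearGroup.setOf_conj_eq_orbit, ← and_assoc]
  refine ⟨?_, fun X htr hirr => IsEllipticSl2.card_orbit hF ⟨htr, hirr⟩⟩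
  have hcount := card_orbits_mul_eq_card (P := IsEllipticSl2) (fun g _ hX => hX.smul g)
    (fun _ hX => hX.card_orbit hF)
  rw [card_isEllipticSl2, mul_comm _ (Nat.card {s : F // _})] at hcount
  have hnonsq := FiniteField.two_mul_card_not_isSquare hF
  have hpos : 0 < (Fintype.card F - 1) * Fintype.card F :=
    Nat.mul_pos (Nat.sub_pos_of_lt Fintype.one_lt_card) Fintype.card_pos
  calc _ = Nat.card {s : F // ¬IsSquare s} := Nat.eq_of_mul_eq_mul_right hpos hcount
    _ = _ := by omega
end

section
/- Let p be an odd prime and let Y be a 2×2 matrix over ℚ_p with trace(Y) = 0 and det(Y) ≠ 0. Then there exist g ∈ GL(2,ℚ_p) and B, C ∈ ℚ_p^× such that g·Y·g^{-1} is the anti-diagonal matrix [[0, B], [C, 0]] and the p-adic valuations satisfy v(B) ≤ v(C) ≤ v(B) + 1. -/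
/-!
A traceless invertible `Y` is not scalar, so after a first conjugation its `(0, 1)` entry `b` is
nonzero, i.e. `Y = !![a, b; c, -a]` with `b ≠ 0`. For every `B ≠ 0` the lower triangular matrix
`!![B / b, 0; a / b, 1]` conjugates it to `!![0, B; -det Y / B, 0]`. Choosing
`B = p ^ ⌊v(-det Y) / 2⌋` makes the valuations of the two antidiagonal entries differ by `0`
or `1`.
-/

open Matrix

namespace Matrix

section IsConj

variable {n R : Type*} [Fintype n] [DecidableEq n]

theorem trace_eq_of_isConj [CommSemiring R] {Y Z : Matrix n n R}
    (h : IsConj Y Z) : Z.trace = Y.trace := by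
  obtain ⟨c, hc⟩ := h
  rw [← trace_units_conj c Y, hc.eq, Units.mul_inv_cancel_right]

theorem det_eq_of_isConj [CommRing R] {Y Z : Matrix n n R}
    (h : IsConj Y Z) : Z.det = Y.det := by
  obtain ⟨c, hc⟩ := h
  rw [← det_units_conj c Y, hc.eq, Units.mul_inv_cancel_right]

end IsConj

variable {K : Type*} [Field K]

theorem exists_isConj_apply_zero_one_ne_zero (Y : Matrix (Fin 2) (Fin 2) K)
    (hY : ∀ c : K, Y ≠ scalar (Fin 2) c) : ∃ Z, IsConj Y Z ∧ Z 0 1 ≠ 0 := by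
  by_cases h01 : Y 0 1 ≠ 0
  · exact ⟨Y, IsConj.refl Y, h01⟩
  by_cases h10 : Y 1 0 ≠ 0
  · refine ⟨!![Y 1 1, Y 1 0; Y 0 1, Y 0 0],
      ⟨GeneralLinearGroup.mkOfDetNeZero !![0, 1; 1, 0] (by simp), ?_⟩, h10⟩
    rw [SemiconjBy, GeneralLinearGroup.val_mkOfDetNeZero, Y.eta_fin_two, mul_fin_two, mul_fin_two]
    simp
  push Not at h01 h10
  have hdiag : Y 1 1 - Y 0 0 ≠ 0 := by
    refine sub_ne_zero.mpr fun h ↦ hY (Y 0 0) ?_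
    ext i j; fin_cases i <;> fin_cases j <;> simp [h01, h10, h]
  refine ⟨!![Y 0 0, Y 1 1 - Y 0 0; 0, Y 1 1],
    ⟨GeneralLinearGroup.mkOfDetNeZero !![1, 1; 0, 1] (by simp), ?_⟩, hdiag⟩
  rw [SemiconjBy, GeneralLinearGroup.val_mkOfDetNeZero, Y.eta_fin_two, h01, h10, mul_fin_two,
    mul_fin_two]
  simp

theorem isConj_antidiag_of_apply_zero_one_ne_zero (Y : Matrix (Fin 2) (Fin 2) K)
    (htr : Y.trace = 0) (h01 : Y 0 1 ≠ 0) {B : K} (hB : B ≠ 0) :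
    IsConj Y !![0, B; -Y.det / B, 0] := by
  obtain ⟨a, b, c, rfl⟩ : ∃ a b c, Y = !![a, b; c, -a] := by
    refine ⟨Y 0 0, Y 0 1, Y 1 0, ?_⟩
    rw [trace_fin_two, add_eq_zero_iff_eq_neg'] at htr
    rw [← htr, ← eta_fin_two]
  change b ≠ 0 at h01
  refine ⟨GeneralLinearGroup.mkOfDetNeZero !![B / b, 0; a / b, 1] (by simp [hB, h01]), ?_⟩
  rw [SemiconjBy, GeneralLinearGroup.val_mkOfDetNeZero, mul_fin_two, mul_fin_two, det_fin_two_of]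
  ext i j; fin_cases i <;> fin_cases j <;>
    simp only [Fin.zero_eta, Fin.mk_one, Fin.isValue, of_apply, cons_val', cons_val_zero,
      cons_val_one, cons_val_fin_one] <;>
    field_simp <;> ring

theorem ne_scalar_of_trace_eq_zero_of_det_ne_zero [NeZero (2 : K)] {Y : Matrix (Fin 2) (Fin 2) K}
    (htr : Y.trace = 0) (hdet : Y.det ≠ 0) (c : K) : Y ≠ scalar (Fin 2) c := by
  rintro rfl
  simp_all

theorem isConj_antidiag [NeZero (2 : K)] (Y : Matrix (Fin 2) (Fin 2) K)
    (htr : Y.trace = 0) (hdet : Y.det ≠ 0) {B : K} (hB : B ≠ 0) :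
    IsConj Y !![0, B; -Y.det / B, 0] := by
  obtain ⟨Z, hYZ, hZ⟩ :=
    exists_isConj_apply_zero_one_ne_zero Y (ne_scalar_of_trace_eq_zero_of_det_ne_zero htr hdet)
  rw [← det_eq_of_isConj hYZ]
  exact hYZ.trans <| isConj_antidiag_of_apply_zero_one_ne_zero Z
    (by rw [trace_eq_of_isConj hYZ, htr]) hZ hB

end Matrix

theorem Padic.exists_valuation_le_valuation_div_le_add_one {p : ℕ} [Fact p.Prime] {D : ℚ_[p]}
    (hD : D ≠ 0) : ∃ B : ℚ_[p], B ≠ 0 ∧ B.valuation ≤ (D / B).valuation ∧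
      (D / B).valuation ≤ B.valuation + 1 := by
  have hp : (p : ℚ_[p]) ≠ 0 := Nat.cast_ne_zero.mpr (Fact.out : p.Prime).ne_zero
  have hB : (p : ℚ_[p]) ^ (D.valuation / 2) ≠ 0 := zpow_ne_zero _ hp
  refine ⟨_, hB, ?_⟩
  rw [div_eq_mul_inv, valuation_mul hD (inv_ne_zero hB), valuation_inv, valuation_zpow,
    valuation_p]
  omega

theorem antidiagonal_conjugate_exists_general
    (p : ℕ) [Fact p.Prime]
    (Y : Matrix (Fin 2) (Fin 2) ℚ_[p]) (htr : Y.trace = 0) (hdet : Y.det ≠ 0) :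
    ∃ g : GL (Fin 2) ℚ_[p], ∃ B C : ℚ_[p], B ≠ 0 ∧ C ≠ 0 ∧
      (g : Matrix (Fin 2) (Fin 2) ℚ_[p]) * Y * ((g⁻¹ : GL (Fin 2) ℚ_[p]) : Matrix (Fin 2) (Fin 2) ℚ_[p])
        = !![0, B; C, 0] ∧
      B.valuation ≤ C.valuation ∧ C.valuation ≤ B.valuation + 1 := by
  have hD : -Y.det ≠ 0 := neg_ne_zero.mpr hdet
  obtain ⟨B, hB, hBC, hCB⟩ := Padic.exists_valuation_le_valuation_div_le_add_one hD
  obtain ⟨g, hg⟩ := isConj_antidiag Y htr hdet hB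
  exact ⟨g, B, -Y.det / B, hB, div_ne_zero hD hB,
    (Units.mul_inv_eq_iff_eq_mul g).mpr hg.eq, hBC, hCB⟩

/-- For `p` an odd prime and `Y` a `2×2` matrix over `ℚ_p` with trace `0` and
nonzero determinant, there are `g ∈ GL(2,ℚ_p)` and `B, C ∈ ℚ_p^×` such that
`g·Y·g⁻¹ = !![0, B; C, 0]` with `v(B) ≤ v(C) ≤ v(B) + 1`. -/
theorem antidiagonal_conjugate_exists
    (p : ℕ) [Fact p.Prime] (hp : Odd p)
    (Y : Matrix (Fin 2) (Fin 2) ℚ_[p]) (htr : Y.trace = 0) (hdet : Y.det ≠ 0) :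
    ∃ g : GL (Fin 2) ℚ_[p], ∃ B C : ℚ_[p], B ≠ 0 ∧ C ≠ 0 ∧
      (g : Matrix (Fin 2) (Fin 2) ℚ_[p]) * Y * ((g⁻¹ : GL (Fin 2) ℚ_[p]) : Matrix (Fin 2) (Fin 2) ℚ_[p])
        = !![0, B; C, 0] ∧
      B.valuation ≤ C.valuation ∧ C.valuation ≤ B.valuation + 1 :=
  antidiagonal_conjugate_exists_general p Y htr hdet
end

section
/- Let p be an odd prime, let ψ : (ℚ_p,+) → ℂ^× be an additive character with conductor pℤ_p, and let μ be an additive Haar measure on ℚ_p. Let B, C ∈ ℚ_p^× satisfy v(B) = v(C) ≤ 0. For an integer ℓ ≥ 0 let T_ℓ = {(a,b,c) ∈ ℚ_p³ : a, b, c ∈ p^{-ℓ}ℤ_p and a² + b·c ∈ ℤ_p}. Then there exists L such that for all integers ℓ ≥ L, the integral over T_ℓ of ψ(b·C + c·B) with respect to the product measure μ³ equals 0. -/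
open MeasureTheory Metric Filter Topology

/-!
Split `T_ℓ` according to whether `|b C| ≤ 1` and `|c B| ≤ 1`. Where both hold, `v(B) + v(C) ≤ 0`
forces `|b c| ≤ 1`, hence `|a| ≤ 1`, so that part is the box `ℤ_p × C⁻¹ℤ_p × B⁻¹ℤ_p`, and the
integral factors through `∫_{C⁻¹ℤ_p} ψ(b C) db = 0`.

On the rest, use that for odd `p` every `1 + p w` with `w ∈ ℤ_p` is a square `η²`. The
measure-preserving substitution `(a, b, c) ↦ (η₁η₂ a, η₁² b, η₂² c)` with `η_i² = 1 + p w_i`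
preserves the region and multiplies the integrand by `ψ(p w₁ b C) ψ(p w₂ c B)`. Averaging over
`(w₁, w₂) ∈ ℤ_p²` and exchanging the integrals kills the integral, because there `|p b C| ≥ 1`
or `|p c B| ≥ 1`, and `ψ(θ ·)` integrates to zero over `ℤ_p` as soon as `|θ| ≥ 1`.
-/

section

variable {p : ℕ} [Fact p.Prime]

theorem PadicInt.exists_sq_eq_of_norm_sub_one_lt (hp : p ≠ 2) {x : ℤ_[p]} (hx : ‖x - 1‖ < 1) :
    ∃ η : ℤ_[p], η ^ 2 = x := by
  have h2 : ‖(2 : ℤ_[p])‖ = 1 := by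
    exact_mod_cast PadicInt.norm_natCast_eq_one_iff.2
      ((Nat.coprime_primes Fact.out Nat.prime_two).2 hp)
  obtain ⟨η, hη, -⟩ := hensels_lemma (p := p) (F := Polynomial.X ^ 2 - Polynomial.C x) (a := 1) (by
    simpa [one_add_one_eq_two, h2, norm_sub_rev] using hx)
  exact ⟨η, by simpa [sub_eq_zero] using hη⟩

namespace Padic

theorem norm_eq_one_of_norm_sub_one_lt {x : ℚ_[p]} (hx : ‖x - 1‖ < 1) : ‖x‖ = 1 := by
  have hne : ‖(1 : ℚ_[p])‖ ≠ ‖x - 1‖ := by rw [norm_one]; exact hx.ne'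
  rw [← add_sub_cancel (1 : ℚ_[p]) x, IsUltrametricDist.norm_add_eq_max_of_norm_ne_norm hne,
    norm_one, max_eq_left hx.le]

theorem exists_sq_eq_of_norm_sub_one_lt (hp : p ≠ 2) {x : ℚ_[p]} (hx : ‖x - 1‖ < 1) :
    ∃ η : ℚ_[p], ‖η‖ = 1 ∧ η ^ 2 = x := by
  have hx1 := norm_eq_one_of_norm_sub_one_lt hx
  obtain ⟨η, hη⟩ := PadicInt.exists_sq_eq_of_norm_sub_one_lt hp (x := ⟨x, hx1.le⟩)
    (by rw [PadicInt.norm_def]; exact hx)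
  have hηx : (η : ℚ_[p]) ^ 2 = x := by simpa using congrArg ((↑) : ℤ_[p] → ℚ_[p]) hη
  refine ⟨η, ?_, hηx⟩
  rw [← pow_eq_one_iff_of_nonneg (norm_nonneg _) two_ne_zero, ← norm_pow, hηx, hx1]

theorem one_le_norm_mul_p_of_one_lt_norm {x : ℚ_[p]} (hx : 1 < ‖x‖) : 1 ≤ ‖x * p‖ := by
  have hp : (p : ℝ) ≤ ‖x‖ := by
    simpa using (Padic.norm_le_pow_iff_norm_lt_pow_add_one x 0).not.1 (by simpa using hx)
  have hp0 : (0 : ℝ) < p := by exact_mod_cast (Fact.out : p.Prime).pos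
  rw [norm_mul, norm_p, le_mul_inv_iff₀ hp0, one_mul]
  exact hp

theorem norm_p_mul_lt_one {w : ℚ_[p]} (hw : ‖w‖ ≤ 1) : ‖(p : ℚ_[p]) * w‖ < 1 := by
  rw [norm_mul]
  exact mul_lt_one_of_nonneg_of_lt_one_left (norm_nonneg _) norm_p_lt_one hw

theorem one_le_norm_of_valuation_nonpos {x : ℚ_[p]} (hx : x ≠ 0) (hv : x.valuation ≤ 0) :
    1 ≤ ‖x‖ := by
  rw [norm_eq_zpow_neg_valuation hx]
  exact one_le_zpow₀ (by exact_mod_cast (Fact.out : p.Prime).one_le) (by omega)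

theorem measurePreserving_mul_left [MeasurableSpace ℚ_[p]] [BorelSpace ℚ_[p]]
    (μ : Measure ℚ_[p]) [μ.IsAddHaarMeasure] {η : ℚ_[p]} (hη : ‖η‖ = 1) :
    MeasurePreserving (η * ·) μ μ := by
  have hη0 : η ≠ 0 := norm_ne_zero_iff.1 (by rw [hη]; exact one_ne_zero)
  let e := ContinuousLinearEquiv.unitsEquivAut ℚ_[p] (Units.mk0 η hη0)
  have he : ⇑e = (η * ·) := funext fun x => mul_comm x η
  let K : TopologicalSpace.PositiveCompacts ℚ_[p] :=
    ⟨⟨closedBall 0 1, isCompact_closedBall 0 1⟩, by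
      rw [(IsUltrametricDist.isOpen_closedBall (0 : ℚ_[p]) one_ne_zero).interior_eq]
      exact nonempty_closedBall.2 zero_le_one⟩
  have hK : e ⁻¹' K = K := by
    ext x
    simp [he, K, norm_mul, hη]
  refine ⟨he ▸ e.continuous.measurable, ?_⟩
  rw [← he, Measure.addHaarMeasure_unique (μ.map e) K,
    Measure.map_apply e.continuous.measurable K.isCompact.measurableSet, hK,
    ← Measure.addHaarMeasure_unique μ K]

end Padic

namespace AddChar

theorem continuous_of_eventually_eq_one {G M : Type*} [AddGroup G] [TopologicalSpace G]
    [IsTopologicalAddGroup G] [Monoid M] [TopologicalSpace M] (ψ : AddChar G M)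
    (hψ : ∀ᶠ x in 𝓝 0, ψ x = 1) : Continuous ψ := by
  refine continuous_iff_continuousAt.2 fun x => ?_
  have hloc : ∀ᶠ y in 𝓝 x, ψ y = ψ x := by
    filter_upwards [((continuous_sub_right x).tendsto' x 0 (sub_self x)).eventually hψ] with y hy
    rw [← sub_add_cancel y x, map_add_eq_mul, hy, one_mul]
  exact continuousAt_const.congr (hloc.mono fun _ hy => hy.symm)

theorem norm_apply_eq_one_of_eventually_eq_one (ψ : AddChar ℚ_[p] ℂ)
    (hψ : ∀ᶠ x in 𝓝 0, ψ x = 1) (x : ℚ_[p]) : ‖ψ x‖ = 1 := by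
  have hpow : Tendsto (fun n : ℕ => (p : ℚ_[p]) ^ n * x) atTop (𝓝 0) := by
    simpa using (tendsto_pow_atTop_nhds_zero_of_norm_lt_one Padic.norm_p_lt_one).mul_const x
  obtain ⟨n, hn⟩ := (hpow.eventually hψ).exists
  have hψn : ψ x ^ p ^ n = 1 := by
    rw [← map_nsmul_eq_pow, nsmul_eq_mul, Nat.cast_pow, hn]
  rw [← pow_eq_one_iff_of_nonneg (norm_nonneg _) (pow_ne_zero n (Fact.out : p.Prime).ne_zero),
    ← norm_pow, hψn, norm_one]

theorem integrableOn_comp_of_eventually_eq_one (ψ : AddChar ℚ_[p] ℂ) {X : Type*}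
    [TopologicalSpace X] [MeasurableSpace X] [OpensMeasurableSpace X]
    (hψ : ∀ᶠ x in 𝓝 0, ψ x = 1) {g : X → ℚ_[p]}
    (hg : Continuous g) {ν : Measure X} {S : Set X} (hS : ν S ≠ ⊤) :
    IntegrableOn (fun x => ψ (g x)) S ν :=
  haveI := isFiniteMeasure_restrict.2 hS
  Integrable.of_bound ((ψ.continuous_of_eventually_eq_one hψ).comp hg).aestronglyMeasurable 1
    (ae_of_all _ fun _ => (ψ.norm_apply_eq_one_of_eventually_eq_one hψ _).le)

theorem setIntegral_addSubgroup_eq_zero {G : Type*} [AddGroup G] [MeasurableSpace G]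
    [MeasurableAdd G] (μ : Measure G) [μ.IsAddRightInvariant] (ψ : AddChar G ℂ)
    (H : AddSubgroup G) {y : G} (hy : y ∈ H) (hψy : ψ y ≠ 1) :
    ∫ x in (H : Set G), ψ x ∂μ = 0 := by
  have hpre : (· + y) ⁻¹' (H : Set G) = H := by
    ext x
    simp [H.add_mem_cancel_right hy]
  have h := (measurePreserving_add_right μ y).setIntegral_preimage_emb
    (measurableEmbedding_addRight y) ψ H
  simp_rw [hpre, map_add_eq_mul, integral_mul_const] at h
  by_contra hne
  exact hψy ((mul_eq_left₀ hne).1 h)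

theorem setIntegral_closedBall_mul_eq_zero {K : Type*} [NormedField K] [IsUltrametricDist K]
    [MeasurableSpace K] [BorelSpace K] (μ : Measure K) [μ.IsAddHaarMeasure] (ψ : AddChar K ℂ)
    (hψ : ∃ x : K, ‖x‖ ≤ 1 ∧ ψ x ≠ 1) {θ : K} {r : ℝ} (hθr : 1 ≤ ‖θ‖ * r) :
    ∫ x in closedBall 0 r, ψ (x * θ) ∂μ = 0 := by
  simp_rw [mul_comm _ θ]
  obtain ⟨x₀, hx₀, hψx₀⟩ := hψ
  have hθ : θ ≠ 0 := by rintro rfl; simp at hθr; linarith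
  have hr : 0 < r := pos_of_mul_pos_right (one_pos.trans_le hθr) (norm_nonneg θ)
  refine setIntegral_addSubgroup_eq_zero μ (ψ.mulShift θ)
    (IsUltrametricDist.closedBall_openAddSubgroup K hr).toAddSubgroup (y := x₀ / θ) ?_ ?_
  · show x₀ / θ ∈ closedBall 0 r
    rw [mem_closedBall_zero_iff, norm_div, div_le_iff₀ (norm_pos_iff.2 hθ)]
    linarith
  · rwa [mulShift_apply, mul_div_cancel₀ _ hθ]

end AddChar

theorem integral_eq_zero_of_integral_mul_kernel_eq {X W : Type*} [MeasurableSpace X]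
    [MeasurableSpace W] {ν : Measure X} [SFinite ν] {μ : Measure W} [IsFiniteMeasure μ]
    [NeZero μ] {f : X → ℂ} (hf : Integrable f ν) {k : X → W → ℂ}
    (hk : AEStronglyMeasurable (Function.uncurry k) (ν.prod μ)) (hk_le : ∀ x w, ‖k x w‖ ≤ 1)
    (hk_avg : ∀ᵐ x ∂ν, ∫ w, k x w ∂μ = 0)
    (hfk : ∀ᵐ w ∂μ, ∫ x, f x * k x w ∂ν = ∫ x, f x ∂ν) :
    ∫ x, f x ∂ν = 0 := by
  have hint : Integrable (Function.uncurry fun x w => f x * k x w) (ν.prod μ) := by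
    refine (hf.comp_fst μ).mono (hf.aestronglyMeasurable.comp_fst.mul hk) ?_
    refine ae_of_all _ fun z => ?_
    rw [Function.uncurry_def, norm_mul]
    exact mul_le_of_le_one_right (norm_nonneg _) (hk_le z.1 z.2)
  have hμ : μ.real Set.univ ≠ 0 := by
    simp [measureReal_def, ENNReal.toReal_eq_zero_iff, NeZero.ne μ]
  have h : μ.real Set.univ • ∫ x, f x ∂ν = 0 := calc
    μ.real Set.univ • ∫ x, f x ∂ν = ∫ w, ∫ x, f x ∂ν ∂μ := (integral_const _).symm
    _ = ∫ w, ∫ x, f x * k x w ∂ν ∂μ := integral_congr_ae (hfk.mono fun _ hw => hw.symm)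
    _ = ∫ x, f x * ∫ w, k x w ∂μ ∂ν := by
      rw [← integral_integral_swap hint]
      simp_rw [integral_const_mul]
    _ = 0 := by
      rw [integral_congr_ae (hk_avg.mono fun x hx => by rw [hx, mul_zero])]
      exact integral_zero _ _
  exact (smul_eq_zero.1 h).resolve_left hμ

variable (p) in
def quadricBox (ρ : ℝ) : Set (ℚ_[p] × ℚ_[p] × ℚ_[p]) :=
  {x | ‖x.1‖ ≤ ρ ∧ ‖x.2.1‖ ≤ ρ ∧ ‖x.2.2‖ ≤ ρ ∧ ‖x.1 ^ 2 + x.2.1 * x.2.2‖ ≤ 1}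

def quadScale {R : Type*} [CommRing R] (η₁ η₂ : R) (x : R × R × R) : R × R × R :=
  (η₁ * η₂ * x.1, η₁ ^ 2 * x.2.1, η₂ ^ 2 * x.2.2)

theorem quadScale_mem_quadricBox_iff {η₁ η₂ : ℚ_[p]} (h₁ : ‖η₁‖ = 1) (h₂ : ‖η₂‖ = 1) {ρ : ℝ}
    {x : ℚ_[p] × ℚ_[p] × ℚ_[p]} : quadScale η₁ η₂ x ∈ quadricBox p ρ ↔ x ∈ quadricBox p ρ := by
  have hq : (η₁ * η₂ * x.1) ^ 2 + η₁ ^ 2 * x.2.1 * (η₂ ^ 2 * x.2.2) =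
      (η₁ * η₂) ^ 2 * (x.1 ^ 2 + x.2.1 * x.2.2) := by ring
  simp [quadricBox, quadScale, hq, h₁, h₂]

theorem quadricBox_diff_eq_prod {ρ : ℝ} {B C : ℚ_[p]} (hBC : 1 ≤ ‖B‖ * ‖C‖) (hρ : 1 ≤ ρ)
    (hBρ : ‖B‖⁻¹ ≤ ρ) (hCρ : ‖C‖⁻¹ ≤ ρ) :
    quadricBox p ρ \ {x | 1 < ‖x.2.1 * C‖ ∨ 1 < ‖x.2.2 * B‖} =
      closedBall 0 1 ×ˢ closedBall 0 ‖C‖⁻¹ ×ˢ closedBall 0 ‖B‖⁻¹ := by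
  have hB : 0 < ‖B‖ := norm_pos_iff.2 (by rintro rfl; simp at hBC; linarith)
  have hC : 0 < ‖C‖ := norm_pos_iff.2 (by rintro rfl; simp at hBC; linarith)
  ext ⟨a, b, c⟩
  simp only [quadricBox, Set.mem_sdiff, Set.mem_ofPred_eq, Set.mem_prod, mem_closedBall_zero_iff,
    not_or, not_lt, norm_mul]
  rw [← le_mul_inv_iff₀ hC, one_mul, ← le_mul_inv_iff₀ hB, one_mul]
  by_cases hbc : ‖b‖ ≤ ‖C‖⁻¹ ∧ ‖c‖ ≤ ‖B‖⁻¹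
  swap
  · tauto
  have hbc₁ : ‖b * c‖ ≤ 1 := calc
    ‖b * c‖ ≤ ‖C‖⁻¹ * ‖B‖⁻¹ := by rw [norm_mul]; gcongr <;> tauto
    _ = (‖B‖ * ‖C‖)⁻¹ := by rw [mul_inv, mul_comm]
    _ ≤ 1 := inv_le_one_of_one_le₀ hBC
  have ha : ‖a ^ 2 + b * c‖ ≤ 1 ↔ ‖a‖ ≤ 1 := by
    have := (IsUltrametricDist.closedBall_openAddSubgroup ℚ_[p] one_pos).add_mem_cancel_right
      (y := a ^ 2) (mem_closedBall_zero_iff.2 hbc₁)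
    change a ^ 2 + b * c ∈ closedBall 0 1 ↔ a ^ 2 ∈ closedBall 0 1 at this
    simpa [pow_le_one_iff_of_nonneg] using this
  rw [ha]
  constructor
  · tauto
  · rintro ⟨ha₁, hb, hc⟩
    exact ⟨⟨ha₁.trans hρ, hb.trans hCρ, hc.trans hBρ, ha₁⟩, hb, hc⟩

section Measure

variable [MeasurableSpace ℚ_[p]]

theorem measure_quadricBox_ne_top (μ : Measure ℚ_[p]) [μ.IsAddHaarMeasure] (ρ : ℝ) :
    μ.prod (μ.prod μ) (quadricBox p ρ) ≠ ⊤ := by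
  have hsub : quadricBox p ρ ⊆ closedBall 0 ρ ×ˢ closedBall 0 ρ ×ˢ closedBall 0 ρ :=
    fun x hx => by simpa [mem_closedBall_zero_iff] using ⟨hx.1, hx.2.1, hx.2.2.1⟩
  refine ne_top_of_le_ne_top ?_ (measure_mono hsub)
  exact ((isCompact_closedBall _ _).prod
    ((isCompact_closedBall _ _).prod (isCompact_closedBall _ _))).measure_ne_top

variable [BorelSpace ℚ_[p]]

theorem measurableSet_quadricBox (ρ : ℝ) : MeasurableSet (quadricBox p ρ) := by
  unfold quadricBox
  measurability

theorem measurePreserving_quadScale (μ : Measure ℚ_[p]) [μ.IsAddHaarMeasure] {η₁ η₂ : ℚ_[p]}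
    (h₁ : ‖η₁‖ = 1) (h₂ : ‖η₂‖ = 1) :
    MeasurePreserving (quadScale η₁ η₂) (μ.prod (μ.prod μ)) (μ.prod (μ.prod μ)) :=
  (Padic.measurePreserving_mul_left μ (by simp [h₁, h₂])).prod
    ((Padic.measurePreserving_mul_left μ (by simp [h₁])).prod
      (Padic.measurePreserving_mul_left μ (by simp [h₂])))

theorem measurableEmbedding_quadScale {η₁ η₂ : ℚ_[p]} (h₁ : η₁ ≠ 0) (h₂ : η₂ ≠ 0) :
    MeasurableEmbedding (quadScale η₁ η₂) :=
  (measurableEmbedding_mulLeft₀ (mul_ne_zero h₁ h₂)).prodMap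
    ((measurableEmbedding_mulLeft₀ (pow_ne_zero 2 h₁)).prodMap
      (measurableEmbedding_mulLeft₀ (pow_ne_zero 2 h₂)))

theorem setIntegral_comp_quadScale {E : Type*} [NormedAddCommGroup E] [NormedSpace ℝ E]
    (μ : Measure ℚ_[p]) [μ.IsAddHaarMeasure] {η₁ η₂ : ℚ_[p]} (h₁ : ‖η₁‖ = 1) (h₂ : ‖η₂‖ = 1)
    {S : Set (ℚ_[p] × ℚ_[p] × ℚ_[p])} (hS : quadScale η₁ η₂ ⁻¹' S = S)
    (f : ℚ_[p] × ℚ_[p] × ℚ_[p] → E) :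
    ∫ x in S, f (quadScale η₁ η₂ x) ∂(μ.prod (μ.prod μ)) = ∫ x in S, f x ∂(μ.prod (μ.prod μ)) := by
  have h := (measurePreserving_quadScale μ h₁ h₂).setIntegral_preimage_emb
    (measurableEmbedding_quadScale (norm_ne_zero_iff.1 (by simp [h₁]))
      (norm_ne_zero_iff.1 (by simp [h₂]))) f S
  rwa [hS] at h

variable {ψ : AddChar ℚ_[p] ℂ}

theorem setIntegral_closedBall_prod_mul_eq_zero (hψ : ∃ x : ℚ_[p], ‖x‖ ≤ 1 ∧ ψ x ≠ 1)
    (μ : Measure ℚ_[p]) [μ.IsAddHaarMeasure] {θ₁ θ₂ : ℚ_[p]} (hθ : 1 < ‖θ₁‖ ∨ 1 < ‖θ₂‖) :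
    ∫ w in closedBall 0 1 ×ˢ closedBall 0 1, ψ (w.1 * (θ₁ * p)) * ψ (w.2 * (θ₂ * p)) ∂(μ.prod μ)
      = 0 := by
  rw [← Measure.prod_restrict,
    integral_prod_mul (fun w₁ => ψ (w₁ * (θ₁ * p))) (fun w₂ => ψ (w₂ * (θ₂ * p)))]
  rcases hθ with h | h
  · rw [AddChar.setIntegral_closedBall_mul_eq_zero μ ψ hψ
      (by rw [mul_one]; exact Padic.one_le_norm_mul_p_of_one_lt_norm h), zero_mul]
  · rw [AddChar.setIntegral_closedBall_mul_eq_zero μ ψ hψ (θ := θ₂ * p)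
      (by rw [mul_one]; exact Padic.one_le_norm_mul_p_of_one_lt_norm h), mul_zero]

theorem setIntegral_mul_twist_eq_of_quadScale_invariant (hp : p ≠ 2) (μ : Measure ℚ_[p])
    [μ.IsAddHaarMeasure] (B C : ℚ_[p]) {S : Set (ℚ_[p] × ℚ_[p] × ℚ_[p])}
    (hS_inv : ∀ η₁ η₂ : ℚ_[p], ‖η₁‖ = 1 → ‖η₂‖ = 1 → quadScale η₁ η₂ ⁻¹' S = S)
    {w : ℚ_[p] × ℚ_[p]} (hw : w ∈ closedBall 0 1 ×ˢ closedBall 0 1) :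
    ∫ x in S, ψ (x.2.1 * C + x.2.2 * B) *
        (ψ (w.1 * (x.2.1 * C * p)) * ψ (w.2 * (x.2.2 * B * p))) ∂(μ.prod (μ.prod μ)) =
      ∫ x in S, ψ (x.2.1 * C + x.2.2 * B) ∂(μ.prod (μ.prod μ)) := by
  obtain ⟨hw₁, hw₂⟩ : ‖w.1‖ ≤ 1 ∧ ‖w.2‖ ≤ 1 := by simpa using hw
  obtain ⟨η₁, h₁, hη₁⟩ := Padic.exists_sq_eq_of_norm_sub_one_lt hp (x := 1 + p * w.1)
    (by simpa using Padic.norm_p_mul_lt_one hw₁)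
  obtain ⟨η₂, h₂, hη₂⟩ := Padic.exists_sq_eq_of_norm_sub_one_lt hp (x := 1 + p * w.2)
    (by simpa using Padic.norm_p_mul_lt_one hw₂)
  rw [← setIntegral_comp_quadScale μ h₁ h₂ (hS_inv η₁ η₂ h₁ h₂)
    (fun x => ψ (x.2.1 * C + x.2.2 * B))]
  congr 1
  funext x
  simp only [quadScale, hη₁, hη₂]
  rw [← AddChar.map_add_eq_mul, ← AddChar.map_add_eq_mul]
  congr 1
  ring

theorem setIntegral_eq_zero_of_quadScale_invariant (hp : p ≠ 2) (hψ₀ : ∀ᶠ x in 𝓝 0, ψ x = 1)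
    (hψ₁ : ∃ x : ℚ_[p], ‖x‖ ≤ 1 ∧ ψ x ≠ 1) (μ : Measure ℚ_[p]) [μ.IsAddHaarMeasure]
    (B C : ℚ_[p]) {S : Set (ℚ_[p] × ℚ_[p] × ℚ_[p])} (hS : MeasurableSet S)
    (hSμ : μ.prod (μ.prod μ) S ≠ ⊤)
    (hS_inv : ∀ η₁ η₂ : ℚ_[p], ‖η₁‖ = 1 → ‖η₂‖ = 1 → quadScale η₁ η₂ ⁻¹' S = S)
    (hS_large : ∀ x ∈ S, 1 < ‖x.2.1 * C‖ ∨ 1 < ‖x.2.2 * B‖) :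
    ∫ x in S, ψ (x.2.1 * C + x.2.2 * B) ∂(μ.prod (μ.prod μ)) = 0 := by
  have hψc := ψ.continuous_of_eventually_eq_one hψ₀
  have hψn := ψ.norm_apply_eq_one_of_eventually_eq_one hψ₀
  have hD : IsCompact (closedBall (0 : ℚ_[p]) 1 ×ˢ closedBall (0 : ℚ_[p]) 1) :=
    (isCompact_closedBall _ _).prod (isCompact_closedBall _ _)
  have : IsFiniteMeasure ((μ.prod μ).restrict (closedBall 0 1 ×ˢ closedBall 0 1)) :=
    isFiniteMeasure_restrict.2 hD.measure_ne_top
  have : NeZero ((μ.prod μ).restrict (closedBall 0 1 ×ˢ closedBall 0 1)) := ⟨by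
    rw [Ne, Measure.restrict_eq_zero]
    exact ((IsUltrametricDist.isOpen_closedBall _ one_ne_zero).prod
      (IsUltrametricDist.isOpen_closedBall _ one_ne_zero)).measure_ne_zero _
      ((nonempty_closedBall.2 zero_le_one).prod (nonempty_closedBall.2 zero_le_one))⟩
  exact integral_eq_zero_of_integral_mul_kernel_eq
    (ψ.integrableOn_comp_of_eventually_eq_one hψ₀ (by fun_prop) hSμ)
    (k := fun x w => ψ (w.1 * (x.2.1 * C * p)) * ψ (w.2 * (x.2.2 * B * p)))
    (Continuous.aestronglyMeasurable (by fun_prop)) (fun x w => by simp [hψn])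
    (ae_restrict_of_forall_mem hS fun x hx =>
      setIntegral_closedBall_prod_mul_eq_zero hψ₁ μ (hS_large x hx))
    (ae_restrict_of_forall_mem hD.measurableSet fun w hw =>
      setIntegral_mul_twist_eq_of_quadScale_invariant hp μ B C hS_inv hw)

theorem setIntegral_quadricBox_diff_eq_zero (hψ₁ : ∃ x : ℚ_[p], ‖x‖ ≤ 1 ∧ ψ x ≠ 1)
    (μ : Measure ℚ_[p]) [μ.IsAddHaarMeasure] {ρ : ℝ} {B C : ℚ_[p]} (hBC : 1 ≤ ‖B‖ * ‖C‖)
    (hρ : 1 ≤ ρ) (hBρ : ‖B‖⁻¹ ≤ ρ) (hCρ : ‖C‖⁻¹ ≤ ρ) :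
    ∫ x in quadricBox p ρ \ {x | 1 < ‖x.2.1 * C‖ ∨ 1 < ‖x.2.2 * B‖},
      ψ (x.2.1 * C + x.2.2 * B) ∂(μ.prod (μ.prod μ)) = 0 := by
  have hB : B ≠ 0 := by rintro rfl; simp at hBC; linarith
  have hC : C ≠ 0 := by rintro rfl; simp at hBC; linarith
  rw [quadricBox_diff_eq_prod hBC hρ hBρ hCρ, ← Measure.prod_restrict, ← Measure.prod_restrict]
  simp_rw [show ∀ x : ℚ_[p] × ℚ_[p] × ℚ_[p],
      ψ (x.2.1 * C + x.2.2 * B) = 1 * (ψ (x.2.1 * C) * ψ (x.2.2 * B)) from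
    fun x => by rw [one_mul, AddChar.map_add_eq_mul]]
  rw [integral_prod_mul (fun _ => (1 : ℂ)) (fun y : ℚ_[p] × ℚ_[p] => ψ (y.1 * C) * ψ (y.2 * B)),
    integral_prod_mul (fun b => ψ (b * C)) (fun c => ψ (c * B)),
    AddChar.setIntegral_closedBall_mul_eq_zero μ ψ hψ₁
      (by rw [mul_inv_cancel₀ (norm_ne_zero_iff.2 hC)]),
    zero_mul, mul_zero]

theorem setIntegral_quadricBox_eq_zero (hp : p ≠ 2) (hψ₀ : ∀ᶠ x in 𝓝 0, ψ x = 1)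
    (hψ₁ : ∃ x : ℚ_[p], ‖x‖ ≤ 1 ∧ ψ x ≠ 1) (μ : Measure ℚ_[p]) [μ.IsAddHaarMeasure] {ρ : ℝ}
    {B C : ℚ_[p]} (hBC : 1 ≤ ‖B‖ * ‖C‖) (hρ : 1 ≤ ρ) (hBρ : ‖B‖⁻¹ ≤ ρ) (hCρ : ‖C‖⁻¹ ≤ ρ) :
    ∫ x in quadricBox p ρ, ψ (x.2.1 * C + x.2.2 * B) ∂(μ.prod (μ.prod μ)) = 0 := by
  have hW : MeasurableSet {x : ℚ_[p] × ℚ_[p] × ℚ_[p] | 1 < ‖x.2.1 * C‖ ∨ 1 < ‖x.2.2 * B‖} := by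
    measurability
  rw [← integral_inter_add_sdiff hW (ψ.integrableOn_comp_of_eventually_eq_one hψ₀
      (by fun_prop) (measure_quadricBox_ne_top μ ρ)),
    setIntegral_quadricBox_diff_eq_zero hψ₁ μ hBC hρ hBρ hCρ, add_zero]
  refine setIntegral_eq_zero_of_quadScale_invariant hp hψ₀ hψ₁ μ B C
    ((measurableSet_quadricBox ρ).inter hW)
    (ne_top_of_le_ne_top (measure_quadricBox_ne_top μ ρ) (measure_mono Set.inter_subset_left))
    (fun η₁ η₂ h₁ h₂ => ?_) fun x hx => hx.2
  ext x
  simp only [Set.mem_preimage, Set.mem_inter_iff, quadScale_mem_quadricBox_iff h₁ h₂]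
  simp [quadScale, h₁, h₂]

end Measure

end

/-- For `p` an odd prime, `ψ` an additive character of `ℚ_p` with conductor `pℤ_p`
(trivial on `pℤ_p`, nontrivial on `ℤ_p`), `μ` an additive Haar measure on `ℚ_p`, and
`B, C ∈ ℚ_p^×` with `v(B) = v(C) ≤ 0`, there exists `L` such that for all `ℓ ≥ L`
the integral of `ψ(b·C + c·B)` over
`T_ℓ = {(a,b,c) : a,b,c ∈ p^{-ℓ}ℤ_p, a² + b·c ∈ ℤ_p}` vanishes. -/
theorem integral_vanishes_equal_valuation
    (p : ℕ) [Fact p.Prime] (hp : Odd p)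
    [MeasurableSpace ℚ_[p]] [BorelSpace ℚ_[p]]
    (ψ : AddChar ℚ_[p] ℂ)
    (hψ_triv : ∀ x : ℚ_[p], ‖x‖ ≤ (p : ℝ)⁻¹ → ψ x = 1)
    (hψ_nontriv : ∃ x : ℚ_[p], ‖x‖ ≤ 1 ∧ ψ x ≠ 1)
    (μ : Measure ℚ_[p]) [μ.IsAddHaarMeasure]
    (B C : ℚ_[p]) (hB : B ≠ 0) (hC : C ≠ 0)
    (hBC : B.valuation = C.valuation) (hC0 : C.valuation ≤ 0) :
    ∃ L : ℕ, ∀ ℓ : ℕ, L ≤ ℓ →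
      (∫ x in {x : ℚ_[p] × ℚ_[p] × ℚ_[p] |
          ‖x.1‖ ≤ (p : ℝ) ^ ℓ ∧ ‖x.2.1‖ ≤ (p : ℝ) ^ ℓ ∧ ‖x.2.2‖ ≤ (p : ℝ) ^ ℓ ∧
            ‖x.1 ^ 2 + x.2.1 * x.2.2‖ ≤ 1},
        ψ (x.2.1 * C + x.2.2 * B) ∂(μ.prod (μ.prod μ))) = 0 := by
  refine ⟨0, fun ℓ _ => ?_⟩
  have hψ₀ : ∀ᶠ x in 𝓝 (0 : ℚ_[p]), ψ x = 1 :=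
    eventually_of_mem (closedBall_mem_nhds 0 (inv_pos.2 (mod_cast (Fact.out : p.Prime).pos)))
      fun x hx => hψ_triv x (mem_closedBall_zero_iff.1 hx)
  have hB₁ := Padic.one_le_norm_of_valuation_nonpos hB (hBC ▸ hC0)
  have hC₁ := Padic.one_le_norm_of_valuation_nonpos hC hC0
  have hρ : (1 : ℝ) ≤ (p : ℝ) ^ ℓ := one_le_pow₀ (by exact_mod_cast (Fact.out : p.Prime).one_le)
  exact setIntegral_quadricBox_eq_zero (hp.ne_two_of_dvd_nat dvd_rfl) hψ₀ hψ_nontriv μ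
    (one_le_mul_of_one_le_of_one_le hB₁ hC₁) hρ ((inv_le_one_of_one_le₀ hB₁).trans hρ)
    ((inv_le_one_of_one_le₀ hC₁).trans hρ)
end

section
/- Let p be an odd prime, let ψ : (ℚ_p,+) → ℂ^× be an additive character with conductor pℤ_p, and let μ be an additive Haar measure on ℚ_p. Let B, C ∈ ℚ_p^× satisfy v(C) = v(B) + 1 and v(C) ≤ 0. For an integer ℓ ≥ 0 let T_ℓ = {(a,b,c) ∈ ℚ_p³ : a, b, c ∈ p^{-ℓ}ℤ_p and a² + b·c ∈ ℤ_p}. Then there exists L such that for all integers ℓ ≥ L, the integral over T_ℓ of ψ(b·C + c·B) with respect to the product measure μ³ equals 0. -/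
/-!
Split `T_ℓ` into the unit cube `ℤ_p³` and the rest. On the cube the integrand factors, and
`∫_{ℤ_p} ψ(bC) db = 0` because `|C| ≥ 1`. The rest is stable under `(a, b, c) ↦ (a, ub, u⁻¹c)` for
`u ∈ ℤ_p^×`, so averaging over `u` replaces the integrand by the Kloosterman integral
`K(x, y) = ∫_{ℤ_p^×} ψ(ux + u⁻¹y) du` at `x = bC`, `y = cB`. Off the cube `|x| ≠ |y|` (equality
gives `|b| = p|c|`, so `v(bc)` is odd, while `a² + bc ∈ ℤ_p` forces `v(a²) = v(bc)`), and the larger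
of the two exceeds `1`. If, say, `|x| > max(1, |y|)`, the substitution `u ↦ (1 + t/x) u` with
`t ∈ ℤ_p` multiplies the integrand of `K(x, y)` by `ψ(ut)` up to an error in `pℤ_p`; integrating
over `t` then shows `K(x, y) = 0`.
-/

open MeasureTheory Metric
open scoped Pointwise

namespace PadicAddChar

variable {p : ℕ} [hp : Fact p.Prime]

lemma norm_le_inv_of_norm_lt_one {z : ℚ_[p]} (h : ‖z‖ < 1) : ‖z‖ ≤ (p : ℝ)⁻¹ := by
  simpa using (Padic.norm_le_pow_iff_norm_lt_pow_add_one z (-1)).2 (by simpa using h)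

lemma one_le_norm_of_valuation_nonpos {x : ℚ_[p]} (hx : x ≠ 0) (h : x.valuation ≤ 0) :
    1 ≤ ‖x‖ := by
  rw [Padic.norm_eq_zpow_neg_valuation hx]
  exact one_le_zpow₀ (by exact_mod_cast hp.out.one_lt.le) (by omega)

lemma norm_eq_prime_mul_norm_of_valuation_eq_add_one {x y : ℚ_[p]} (hx : x ≠ 0) (hy : y ≠ 0)
    (h : y.valuation = x.valuation + 1) : ‖x‖ = p * ‖y‖ := by
  have hp0 : (p : ℝ) ≠ 0 := by exact_mod_cast hp.out.ne_zero
  rw [Padic.norm_eq_zpow_neg_valuation hx, Padic.norm_eq_zpow_neg_valuation hy, h, neg_add,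
    zpow_add₀ hp0, zpow_neg_one, mul_comm, inv_mul_cancel_right₀ hp0]

lemma norm_one_add_div_eq_one {K : Type*} [NormedField K] [IsUltrametricDist K] {t x : K}
    (ht : ‖t‖ ≤ 1) (hx : 1 < ‖x‖) : ‖1 + t / x‖ = 1 := by
  have htx : ‖t / x‖ < 1 := by rw [norm_div, div_lt_one (by linarith)]; linarith
  rw [IsUltrametricDist.norm_add_eq_max_of_norm_ne_norm (by rw [norm_one]; exact htx.ne'),
    norm_one, max_eq_left htx.le]

lemma norm_sq_ne_prime_mul_norm_sq (a : ℚ_[p]) {c : ℚ_[p]} (hc : c ≠ 0) :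
    ‖a‖ ^ 2 ≠ p * ‖c‖ ^ 2 := by
  have hp1 : (1 : ℝ) < p := by exact_mod_cast hp.out.one_lt
  rcases eq_or_ne a 0 with rfl | ha
  · simpa using ⟨hp.out.ne_zero, hc⟩
  intro h
  rw [Padic.norm_eq_zpow_neg_valuation ha, Padic.norm_eq_zpow_neg_valuation hc,
    ← zpow_natCast, ← zpow_natCast, ← zpow_mul, ← zpow_mul, ← zpow_one_add₀ (by positivity)] at h
  have := zpow_right_injective₀ (by positivity) hp1.ne' h
  push_cast at this
  omega

lemma norm_le_one_of_norm_sq_add_mul_le_one {a b c : ℚ_[p]} (h : ‖a ^ 2 + b * c‖ ≤ 1)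
    (hbc : ‖b‖ = p * ‖c‖) : ‖b‖ ≤ 1 ∧ ‖c‖ ≤ 1 := by
  have hp1 : (1 : ℝ) < p := by exact_mod_cast hp.out.one_lt
  have hcb : ‖c‖ ≤ ‖b‖ := by rw [hbc]; nlinarith [norm_nonneg c]
  by_contra hne
  have hb : 1 < ‖b‖ := by
    by_contra! hb
    exact hne ⟨hb, hcb.trans hb⟩
  have hc : 1 ≤ ‖c‖ := by
    by_contra! hc
    have : (p : ℝ) * ‖c‖ ≤ p * (p : ℝ)⁻¹ := by gcongr; exact norm_le_inv_of_norm_lt_one hc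
    rw [mul_inv_cancel₀ (by positivity), ← hbc] at this
    linarith
  have hbc1 : 1 < ‖b * c‖ := by rw [norm_mul]; nlinarith
  have ha : ‖a ^ 2‖ = ‖b * c‖ := by
    by_contra hne
    rw [IsUltrametricDist.norm_add_eq_max_of_norm_ne_norm hne] at h
    linarith [le_max_right ‖a ^ 2‖ ‖b * c‖]
  rw [norm_pow, norm_mul, hbc] at ha
  exact norm_sq_ne_prime_mul_norm_sq a (c := c) (norm_pos_iff.mp (by linarith)) (by rw [ha]; ring)

lemma norm_ne_and_one_lt_max {a b c B C : ℚ_[p]} (hC : 1 ≤ ‖C‖) (hBC : ‖B‖ = p * ‖C‖)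
    (habc : ‖a ^ 2 + b * c‖ ≤ 1) (hout : ¬(‖a‖ ≤ 1 ∧ ‖b‖ ≤ 1 ∧ ‖c‖ ≤ 1)) :
    ‖b * C‖ ≠ ‖c * B‖ ∧ 1 < max ‖b * C‖ ‖c * B‖ := by
  have hB : 1 ≤ ‖B‖ := by rw [hBC]; nlinarith [(by exact_mod_cast hp.out.one_lt : (1 : ℝ) < p)]
  have hbc : ¬(‖b‖ ≤ 1 ∧ ‖c‖ ≤ 1) := by
    rintro ⟨hb, hc⟩
    refine hout ⟨(pow_le_one_iff_of_nonneg (norm_nonneg a) two_ne_zero).1 ?_, hb, hc⟩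
    calc ‖a‖ ^ 2 = ‖(a ^ 2 + b * c) + -(b * c)‖ := by rw [add_neg_cancel_right, norm_pow]
      _ ≤ max ‖a ^ 2 + b * c‖ ‖-(b * c)‖ := IsUltrametricDist.norm_add_le_max _ _
      _ ≤ 1 := max_le habc (by rw [norm_neg, norm_mul]; exact mul_le_one₀ hb (norm_nonneg c) hc)
  refine ⟨fun h ↦ hbc (norm_le_one_of_norm_sq_add_mul_le_one habc ?_), ?_⟩
  · rw [norm_mul, norm_mul, hBC] at h
    exact mul_right_cancel₀ (by positivity : ‖C‖ ≠ 0) (by rw [h]; ring)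
  · by_contra! h
    rw [max_le_iff, norm_mul, norm_mul] at h
    exact hbc ⟨(le_mul_of_one_le_right (norm_nonneg b) hC).trans h.1,
      (le_mul_of_one_le_right (norm_nonneg c) hB).trans h.2⟩

section Character

variable {ψ : AddChar ℚ_[p] ℂ}

lemma continuous_of_trivial_on_closedBall (hψ_triv : ∀ x : ℚ_[p], ‖x‖ ≤ (p : ℝ)⁻¹ → ψ x = 1) :
    Continuous ψ := by
  refine continuous_iff_continuousAt.2 fun x ↦ Filter.EventuallyEq.continuousAt (y := ψ x) ?_
  filter_upwards [ball_mem_nhds x (inv_pos.2 (Nat.cast_pos.2 hp.out.pos))] with y hy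
  rw [← add_sub_cancel x y, AddChar.map_add_eq_mul,
    hψ_triv (y - x) (by rw [← dist_eq_norm]; exact (mem_ball.1 hy).le), mul_one]

lemma norm_apply_of_trivial_on_closedBall
    (hψ_triv : ∀ x : ℚ_[p], ‖x‖ ≤ (p : ℝ)⁻¹ → ψ x = 1) (z : ℚ_[p]) : ‖ψ z‖ = 1 := by
  have hp1 : (p : ℝ)⁻¹ < 1 := inv_lt_one_of_one_lt₀ (by exact_mod_cast hp.out.one_lt)
  obtain ⟨n, hn⟩ : ∃ n : ℕ, ‖(p : ℚ_[p]) ^ n * z‖ ≤ (p : ℝ)⁻¹ := by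
    rcases eq_or_ne z 0 with rfl | hz
    · exact ⟨0, by simp⟩
    obtain ⟨n, hn⟩ := exists_pow_lt_of_lt_one
      (div_pos (inv_pos.2 (Nat.cast_pos.2 hp.out.pos)) (norm_pos_iff.2 hz)) hp1
    refine ⟨n, ?_⟩
    rw [norm_mul, norm_pow, Padic.norm_p]
    exact (lt_div_iff₀ (norm_pos_iff.2 hz)).1 hn |>.le
  have hpow : ψ z ^ p ^ n = 1 := by
    rw [← AddChar.map_nsmul_eq_pow, nsmul_eq_mul, ← hψ_triv _ hn]
    push_cast; rfl
  exact Complex.norm_eq_one_of_pow_eq_one hpow (pow_ne_zero n hp.out.ne_zero)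

lemma apply_one_add_div_mul_mul_add (hψ_triv : ∀ x : ℚ_[p], ‖x‖ ≤ (p : ℝ)⁻¹ → ψ x = 1)
    {x y t u : ℚ_[p]} (hx : 1 < ‖x‖) (hyx : ‖y‖ < ‖x‖) (ht : ‖t‖ ≤ 1) (hu : ‖u‖ = 1) :
    ψ ((1 + t / x) * u * x + ((1 + t / x) * u)⁻¹ * y) = ψ (u * x + u⁻¹ * y) * ψ (u * t) := by
  have hx0 : x ≠ 0 := norm_pos_iff.1 (by linarith)
  have hu0 : u ≠ 0 := norm_pos_iff.1 (by simp [hu])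
  have hs := norm_one_add_div_eq_one ht hx
  have hxt : x + t ≠ 0 := by
    have hs0 : 1 + t / x ≠ 0 := norm_pos_iff.1 (by simp [hs])
    rwa [one_add_div hx0, div_ne_zero_iff, and_iff_left hx0] at hs0
  have herr : ψ (-(u⁻¹ * y * (t / x) / (1 + t / x))) = 1 := by
    refine hψ_triv _ (norm_le_inv_of_norm_lt_one ?_)
    rw [norm_neg, norm_div, norm_mul, norm_mul, norm_inv, hu, hs, inv_one, one_mul, div_one,
      norm_div]
    calc ‖y‖ * (‖t‖ / ‖x‖) ≤ ‖y‖ * (1 / ‖x‖) := by gcongr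
      _ < 1 := by rw [mul_one_div, div_lt_one (by linarith)]; exact hyx
  calc ψ ((1 + t / x) * u * x + ((1 + t / x) * u)⁻¹ * y)
      = ψ ((u * x + u⁻¹ * y) + u * t + -(u⁻¹ * y * (t / x) / (1 + t / x))) := by
        congr 1; field_simp; ring
    _ = ψ (u * x + u⁻¹ * y) * ψ (u * t) := by
        rw [AddChar.map_add_eq_mul, AddChar.map_add_eq_mul, herr, mul_one]

end Character

lemma eq_zero_of_setIntegral_const_eq_zero {X E : Type*} [MeasurableSpace X]
    [NormedAddCommGroup E] [NormedSpace ℝ E] [CompleteSpace E] {ν : Measure X} {s : Set X}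
    (hs₀ : ν s ≠ 0) (hs : ν s ≠ ⊤) {c : E} (h : ∫ _ in s, c ∂ν = 0) : c = 0 := by
  rw [setIntegral_const, smul_eq_zero] at h
  exact h.resolve_left (ENNReal.toReal_pos hs₀ hs).ne'

section Haar

variable [MeasurableSpace ℚ_[p]] [BorelSpace ℚ_[p]] (μ : Measure ℚ_[p]) [μ.IsAddHaarMeasure]

lemma measurePreserving_mul_left_of_norm_eq_one {u : ℚ_[p]} (hu : ‖u‖ = 1) :
    MeasurePreserving (u * ·) μ μ := by
  have hu0 : u ≠ 0 := norm_ne_zero_iff.1 (by simp [hu])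
  have hball : ∀ v : ℚ_[p]ˣ, ‖(v : ℚ_[p])‖ = 1 → v • closedBall (0 : ℚ_[p]) 1 = closedBall 0 1 := by
    intro v hv
    show (v : ℚ_[p]) • closedBall (0 : ℚ_[p]) 1 = _
    rw [_root_.smul_closedBall _ _ zero_le_one, hv, smul_zero, one_mul]
  have hΔ : ∀ v : ℚ_[p]ˣ, ‖(v : ℚ_[p])‖ = 1 → distribHaarChar ℚ_[p] v = 1 := by
    intro v hv
    refine distribHaarChar_eq_of_measure_smul_eq_mul (μ := μ)
      (measure_closedBall_pos μ 0 one_pos).ne' measure_closedBall_lt_top.ne ?_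
    rw [hball v hv, ENNReal.coe_one, one_mul]
  refine ⟨measurable_const_mul u, Measure.ext fun s hs ↦ ?_⟩
  rw [Measure.map_apply (measurable_const_mul u) hs,
    show (u * ·) ⁻¹' s = (Units.mk0 u hu0)⁻¹ • s from Set.preimage_smul (Units.mk0 u hu0) s,
    ← distribHaarChar_mul, hΔ _ (by simp [hu]), ENNReal.coe_one, one_mul]

lemma setIntegral_sphere_comp_mul_left {E : Type*} [NormedAddCommGroup E] [NormedSpace ℝ E]
    {s : ℚ_[p]} (hs : ‖s‖ = 1) (f : ℚ_[p] → E) :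
    ∫ u in sphere 0 1, f (s * u) ∂μ = ∫ u in sphere 0 1, f u ∂μ := by
  have hpre : (s * ·) ⁻¹' sphere (0 : ℚ_[p]) 1 = sphere 0 1 := by ext u; simp [hs]
  rw [← (measurePreserving_mul_left_of_norm_eq_one μ hs).setIntegral_preimage_emb
    (Homeomorph.mulLeft₀ s (norm_ne_zero_iff.1 (by simp [hs]))).measurableEmbedding f, hpre]

lemma setIntegral_closedBall_apply_mul_eq_zero {ψ : AddChar ℚ_[p] ℂ}
    (hψ_nontriv : ∃ x : ℚ_[p], ‖x‖ ≤ 1 ∧ ψ x ≠ 1) {w : ℚ_[p]} (hw : 1 ≤ ‖w‖) :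
    ∫ t in closedBall 0 1, ψ (w * t) ∂μ = 0 := by
  obtain ⟨z, hz, hψz⟩ := hψ_nontriv
  have hw0 : w ≠ 0 := norm_pos_iff.1 (by linarith)
  have hball : closedBall (-(w⁻¹ * z)) 1 = closedBall 0 1 := by
    refine IsUltrametricDist.closedBall_eq_of_mem ?_
    rw [mem_closedBall, dist_zero_left, norm_neg, norm_mul, norm_inv]
    exact mul_le_one₀ (inv_le_one_of_one_le₀ hw) (norm_nonneg z) hz
  have hshift := (measurePreserving_add_right μ (w⁻¹ * z)).setIntegral_preimage_emb
    (Homeomorph.addRight _).measurableEmbedding (fun t ↦ ψ (w * t)) (closedBall 0 1)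
  rw [preimage_add_right_closedBall, zero_sub, hball] at hshift
  simp_rw [mul_add, mul_inv_cancel_left₀ hw0, AddChar.map_add_eq_mul, integral_mul_const] at hshift
  by_contra h
  exact hψz (mul_left_cancel₀ h (hshift.trans (mul_one _).symm))

lemma setIntegral_eq_zero_of_torus_invariant {X : Type*} [MeasurableSpace X] (ν : Measure X)
    [SFinite ν] {g : ℚ_[p] × ℚ_[p] → ℂ} (hg : Measurable g) {M : ℝ} (hgM : ∀ w, ‖g w‖ ≤ M)
    {E : Set (X × ℚ_[p] × ℚ_[p])} (hEfin : ν.prod (μ.prod μ) E ≠ ⊤)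
    (hinv : ∀ u : ℚ_[p], ‖u‖ = 1 → ∀ z, (z.1, u * z.2.1, u⁻¹ * z.2.2) ∈ E ↔ z ∈ E)
    (hzero : ∀ z ∈ E, ∫ u in sphere 0 1, g (u * z.2.1, u⁻¹ * z.2.2) ∂μ = 0) :
    ∫ z in E, g z.2 ∂ν.prod (μ.prod μ) = 0 := by
  set ρ := ν.prod (μ.prod μ)
  have hrotate : ∀ u ∈ sphere (0 : ℚ_[p]) 1,
      ∫ z in E, g (u * z.2.1, u⁻¹ * z.2.2) ∂ρ = ∫ z in E, g z.2 ∂ρ := by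
    intro u hu
    have hu : ‖u‖ = 1 := mem_sphere_zero_iff_norm.1 hu
    have hu' : ‖u⁻¹‖ = 1 := by rw [norm_inv, hu, inv_one]
    have hu0 : u ≠ 0 := norm_pos_iff.1 (by simp [hu])
    let φ : X × ℚ_[p] × ℚ_[p] → X × ℚ_[p] × ℚ_[p] := Prod.map id (Prod.map (u * ·) (u⁻¹ * ·))
    have hmp : MeasurePreserving φ ρ ρ :=
      (MeasurePreserving.id ν).prod ((measurePreserving_mul_left_of_norm_eq_one μ hu).prod
        (measurePreserving_mul_left_of_norm_eq_one μ hu'))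
    have hemb : MeasurableEmbedding φ :=
      MeasurableEmbedding.id.prodMap ((Homeomorph.mulLeft₀ u hu0).measurableEmbedding.prodMap
        (Homeomorph.mulLeft₀ u⁻¹ (inv_ne_zero hu0)).measurableEmbedding)
    have := hmp.setIntegral_preimage_emb hemb (fun z ↦ g z.2) E
    rwa [show φ ⁻¹' E = E from Set.ext (hinv u hu)] at this
  have : IsFiniteMeasure (μ.restrict (sphere 0 1)) :=
    isFiniteMeasure_restrict.2 (isCompact_sphere 0 1).measure_lt_top.ne
  have : IsFiniteMeasure (ρ.restrict E) := isFiniteMeasure_restrict.2 hEfin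
  have hint : Integrable (Function.uncurry fun u (z : X × ℚ_[p] × ℚ_[p]) ↦
      g (u * z.2.1, u⁻¹ * z.2.2)) ((μ.restrict (sphere 0 1)).prod (ρ.restrict E)) :=
    .of_bound (hg.comp (by fun_prop)).aestronglyMeasurable M (.of_forall fun _ ↦ hgM _)
  refine eq_zero_of_setIntegral_const_eq_zero
    ((IsUltrametricDist.isOpen_sphere 0 one_ne_zero).measure_pos μ ⟨1, by simp⟩).ne'
    (isCompact_sphere 0 1).measure_lt_top.ne ?_
  calc ∫ _ in sphere 0 1, ∫ z in E, g z.2 ∂ρ ∂μ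
      = ∫ u in sphere 0 1, ∫ z in E, g (u * z.2.1, u⁻¹ * z.2.2) ∂ρ ∂μ :=
        setIntegral_congr_fun isClosed_sphere.measurableSet fun u hu ↦ (hrotate u hu).symm
    _ = ∫ z in E, ∫ u in sphere 0 1, g (u * z.2.1, u⁻¹ * z.2.2) ∂μ ∂ρ :=
        integral_integral_swap hint
    _ = 0 := setIntegral_eq_zero_of_forall_eq_zero hzero

end Haar

noncomputable def kloostermanIntegral [MeasurableSpace ℚ_[p]] (μ : Measure ℚ_[p])
    (ψ : AddChar ℚ_[p] ℂ) (x y : ℚ_[p]) : ℂ :=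
  ∫ u in sphere 0 1, ψ (u * x + u⁻¹ * y) ∂μ

section Kloosterman

variable [MeasurableSpace ℚ_[p]] [BorelSpace ℚ_[p]] (μ : Measure ℚ_[p]) [μ.IsAddHaarMeasure]
  {ψ : AddChar ℚ_[p] ℂ}

lemma integral_eq_zero_of_twist_invariant
    (hψ_triv : ∀ x : ℚ_[p], ‖x‖ ≤ (p : ℝ)⁻¹ → ψ x = 1)
    (hψ_nontriv : ∃ x : ℚ_[p], ‖x‖ ≤ 1 ∧ ψ x ≠ 1) {X : Type*} [MeasurableSpace X]
    {ν : Measure X} [IsFiniteMeasure ν] {f : X → ℂ} (hf : Integrable f ν) {w : X → ℚ_[p]}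
    (hw : Measurable w) (hw1 : ∀ᵐ a ∂ν, 1 ≤ ‖w a‖)
    (htwist : ∀ t ∈ closedBall (0 : ℚ_[p]) 1, ∫ a, f a * ψ (w a * t) ∂ν = ∫ a, f a ∂ν) :
    ∫ a, f a ∂ν = 0 := by
  let μ : Measure ℚ_[p] := Measure.addHaar
  have : IsFiniteMeasure (μ.restrict (closedBall 0 1)) :=
    isFiniteMeasure_restrict.2 measure_closedBall_lt_top.ne
  have hint : Integrable (Function.uncurry fun t a ↦ f a * ψ (w a * t))
      ((μ.restrict (closedBall 0 1)).prod ν) :=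
    (hf.comp_snd _).mul_bdd (c := 1)
      ((continuous_of_trivial_on_closedBall hψ_triv).measurable.comp
        ((hw.comp measurable_snd).mul measurable_fst)).aestronglyMeasurable
      (.of_forall fun _ ↦ (norm_apply_of_trivial_on_closedBall hψ_triv _).le)
  refine eq_zero_of_setIntegral_const_eq_zero (measure_closedBall_pos μ 0 one_pos).ne'
    measure_closedBall_lt_top.ne ?_
  calc ∫ _ in closedBall 0 1, ∫ a, f a ∂ν ∂μ
      = ∫ t in closedBall 0 1, ∫ a, f a * ψ (w a * t) ∂ν ∂μ :=
        setIntegral_congr_fun measurableSet_closedBall fun t ht ↦ (htwist t ht).symm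
    _ = ∫ a, ∫ t in closedBall 0 1, f a * ψ (w a * t) ∂μ ∂ν := integral_integral_swap hint
    _ = 0 := integral_eq_zero_of_ae <| hw1.mono fun a ha ↦ by
        dsimp only
        rw [Pi.zero_apply, integral_const_mul,
          setIntegral_closedBall_apply_mul_eq_zero μ hψ_nontriv ha, mul_zero]

lemma integrableOn_sphere_apply_mul_add_inv_mul
    (hψ_triv : ∀ x : ℚ_[p], ‖x‖ ≤ (p : ℝ)⁻¹ → ψ x = 1) (x y : ℚ_[p]) :
    IntegrableOn (fun u ↦ ψ (u * x + u⁻¹ * y)) (sphere 0 1) μ :=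
  .of_bound (isCompact_sphere 0 1).measure_lt_top
    ((continuous_of_trivial_on_closedBall hψ_triv).measurable.comp
      ((measurable_id.mul_const x).add (measurable_inv.mul_const y))).aestronglyMeasurable 1
    (.of_forall fun _ ↦ (norm_apply_of_trivial_on_closedBall hψ_triv _).le)

lemma kloostermanIntegral_eq_zero_of_dominant_left
    (hψ_triv : ∀ x : ℚ_[p], ‖x‖ ≤ (p : ℝ)⁻¹ → ψ x = 1)
    (hψ_nontriv : ∃ x : ℚ_[p], ‖x‖ ≤ 1 ∧ ψ x ≠ 1) {x y : ℚ_[p]} (hx : 1 < ‖x‖)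
    (hyx : ‖y‖ < ‖x‖) : kloostermanIntegral μ ψ x y = 0 := by
  have : IsFiniteMeasure (μ.restrict (sphere 0 1)) :=
    isFiniteMeasure_restrict.2 (isCompact_sphere 0 1).measure_lt_top.ne
  refine integral_eq_zero_of_twist_invariant hψ_triv hψ_nontriv
    (integrableOn_sphere_apply_mul_add_inv_mul μ hψ_triv x y) measurable_id
    (ae_restrict_of_forall_mem isClosed_sphere.measurableSet fun u hu ↦
      (mem_sphere_zero_iff_norm.1 hu).ge)
    fun t ht ↦ ?_
  rw [mem_closedBall_zero_iff] at ht
  refine (setIntegral_congr_fun isClosed_sphere.measurableSet fun u hu ↦ ?_).trans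
    (setIntegral_sphere_comp_mul_left μ (norm_one_add_div_eq_one ht hx)
      fun u ↦ ψ (u * x + u⁻¹ * y))
  exact (apply_one_add_div_mul_mul_add hψ_triv hx hyx ht (mem_sphere_zero_iff_norm.1 hu)).symm

lemma kloostermanIntegral_eq_zero_of_dominant_right
    (hψ_triv : ∀ x : ℚ_[p], ‖x‖ ≤ (p : ℝ)⁻¹ → ψ x = 1)
    (hψ_nontriv : ∃ x : ℚ_[p], ‖x‖ ≤ 1 ∧ ψ x ≠ 1) {x y : ℚ_[p]} (hy : 1 < ‖y‖)
    (hxy : ‖x‖ < ‖y‖) : kloostermanIntegral μ ψ x y = 0 := by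
  have : IsFiniteMeasure (μ.restrict (sphere 0 1)) :=
    isFiniteMeasure_restrict.2 (isCompact_sphere 0 1).measure_lt_top.ne
  refine integral_eq_zero_of_twist_invariant hψ_triv hψ_nontriv
    (integrableOn_sphere_apply_mul_add_inv_mul μ hψ_triv x y) measurable_inv
    (ae_restrict_of_forall_mem isClosed_sphere.measurableSet fun u hu ↦ by
      simp [mem_sphere_zero_iff_norm.1 hu])
    fun t ht ↦ ?_
  rw [mem_closedBall_zero_iff] at ht
  have hs : ‖(1 + t / y)⁻¹‖ = 1 := by rw [norm_inv, norm_one_add_div_eq_one ht hy, inv_one]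
  refine (setIntegral_congr_fun isClosed_sphere.measurableSet fun u hu ↦ ?_).trans
    (setIntegral_sphere_comp_mul_left μ hs fun u ↦ ψ (u * x + u⁻¹ * y))
  -- the left-dominant shift, applied to `u⁻¹` with the roles of `x` and `y` exchanged
  have := apply_one_add_div_mul_mul_add hψ_triv hy hxy ht
    (by simpa using mem_sphere_zero_iff_norm.1 hu : ‖u⁻¹‖ = 1)
  rw [mul_inv, inv_inv] at this
  rw [mul_inv, inv_inv, add_comm ((1 + t / y)⁻¹ * u * x), this, add_comm]

lemma kloostermanIntegral_eq_zero_of_norm_ne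
    (hψ_triv : ∀ x : ℚ_[p], ‖x‖ ≤ (p : ℝ)⁻¹ → ψ x = 1)
    (hψ_nontriv : ∃ x : ℚ_[p], ‖x‖ ≤ 1 ∧ ψ x ≠ 1) {x y : ℚ_[p]} (hne : ‖x‖ ≠ ‖y‖)
    (h : 1 < max ‖x‖ ‖y‖) : kloostermanIntegral μ ψ x y = 0 := by
  rcases hne.lt_or_gt with hxy | hyx
  · exact kloostermanIntegral_eq_zero_of_dominant_right μ hψ_triv hψ_nontriv
      (by rwa [max_eq_right hxy.le] at h) hxy
  · exact kloostermanIntegral_eq_zero_of_dominant_left μ hψ_triv hψ_nontriv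
      (by rwa [max_eq_left hyx.le] at h) hyx

lemma setIntegral_cube_apply_mul_add_mul_eq_zero
    (hψ_nontriv : ∃ x : ℚ_[p], ‖x‖ ≤ 1 ∧ ψ x ≠ 1) {B C : ℚ_[p]} (hC : 1 ≤ ‖C‖) :
    ∫ z in closedBall (0 : ℚ_[p]) 1 ×ˢ closedBall (0 : ℚ_[p]) 1 ×ˢ closedBall (0 : ℚ_[p]) 1,
      ψ (z.2.1 * C + z.2.2 * B) ∂μ.prod (μ.prod μ) = 0 := by
  rw [← Measure.prod_restrict, ← Measure.prod_restrict,
    integral_fun_snd (fun w : ℚ_[p] × ℚ_[p] ↦ ψ (w.1 * C + w.2 * B))]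
  simp_rw [AddChar.map_add_eq_mul]
  rw [integral_prod_mul (fun b ↦ ψ (b * C)) (fun c ↦ ψ (c * B))]
  simp_rw [mul_comm _ C, setIntegral_closedBall_apply_mul_eq_zero μ hψ_nontriv hC, zero_mul,
    smul_zero]

lemma setIntegral_apply_mul_add_mul_eq_zero (hψ_triv : ∀ x : ℚ_[p], ‖x‖ ≤ (p : ℝ)⁻¹ → ψ x = 1)
    (hψ_nontriv : ∃ x : ℚ_[p], ‖x‖ ≤ 1 ∧ ψ x ≠ 1) {B C : ℚ_[p]} (hC : 1 ≤ ‖C‖)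
    (hBC : ‖B‖ = p * ‖C‖) {R : ℝ} (hR : 1 ≤ R) :
    ∫ x in {x : ℚ_[p] × ℚ_[p] × ℚ_[p] |
        ‖x.1‖ ≤ R ∧ ‖x.2.1‖ ≤ R ∧ ‖x.2.2‖ ≤ R ∧ ‖x.1 ^ 2 + x.2.1 * x.2.2‖ ≤ 1},
      ψ (x.2.1 * C + x.2.2 * B) ∂(μ.prod (μ.prod μ)) = 0 := by
  set T := {x : ℚ_[p] × ℚ_[p] × ℚ_[p] |
    ‖x.1‖ ≤ R ∧ ‖x.2.1‖ ≤ R ∧ ‖x.2.2‖ ≤ R ∧ ‖x.1 ^ 2 + x.2.1 * x.2.2‖ ≤ 1}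
  set Q := closedBall (0 : ℚ_[p]) 1 ×ˢ closedBall (0 : ℚ_[p]) 1 ×ˢ closedBall (0 : ℚ_[p]) 1
  have hTQ : T ∩ Q = Q := by
    refine Set.inter_eq_right.2 fun ⟨a, b, c⟩ ⟨ha, hb, hc⟩ ↦ ?_
    simp only [mem_closedBall_zero_iff] at ha hb hc
    refine ⟨ha.trans hR, hb.trans hR, hc.trans hR,
      (IsUltrametricDist.norm_add_le_max _ _).trans (max_le ?_ ?_)⟩
    · rw [norm_pow]; exact pow_le_one₀ (norm_nonneg a) ha
    · rw [norm_mul]; exact mul_le_one₀ hb (norm_nonneg c) hc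
  have hTfin : μ.prod (μ.prod μ) T ≠ ⊤ := by
    refine (measure_mono (t := closedBall 0 R ×ˢ closedBall 0 R ×ˢ closedBall 0 R)
      fun x hx ↦ ?_).trans_lt ?_ |>.ne
    · simp only [Set.mem_prod, mem_closedBall_zero_iff]; exact ⟨hx.1, hx.2.1, hx.2.2.1⟩
    · simp only [Measure.prod_prod]
      exact ENNReal.mul_lt_top measure_closedBall_lt_top
        (ENNReal.mul_lt_top measure_closedBall_lt_top measure_closedBall_lt_top)
  have hg : Measurable fun w : ℚ_[p] × ℚ_[p] ↦ ψ (w.1 * C + w.2 * B) :=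
    (continuous_of_trivial_on_closedBall hψ_triv).measurable.comp (by fun_prop)
  have hgM := fun w : ℚ_[p] × ℚ_[p] ↦
    (norm_apply_of_trivial_on_closedBall hψ_triv (w.1 * C + w.2 * B)).le
  rw [← integral_inter_add_sdiff (f := fun x ↦ ψ (x.2.1 * C + x.2.2 * B))
      (measurableSet_closedBall.prod (measurableSet_closedBall.prod measurableSet_closedBall))
      (.of_bound hTfin.lt_top (hg.comp measurable_snd).aestronglyMeasurable 1
        (.of_forall fun z ↦ hgM z.2)),
    hTQ, setIntegral_cube_apply_mul_add_mul_eq_zero μ hψ_nontriv hC, zero_add]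
  refine setIntegral_eq_zero_of_torus_invariant μ μ hg hgM
    (measure_mono Set.sdiff_subset |>.trans_lt hTfin.lt_top).ne ?_ ?_
  · intro u hu z
    have hbc : u * z.2.1 * (u⁻¹ * z.2.2) = z.2.1 * z.2.2 := by
      field_simp [norm_pos_iff.1 (by simp [hu] : 0 < ‖u‖)]
    simp [T, norm_mul, hu, hbc]
  · rintro ⟨a, b, c⟩ ⟨⟨-, -, -, habc⟩, hout⟩
    obtain ⟨hne, h1⟩ := norm_ne_and_one_lt_max hC hBC habc (by simpa [Q] using hout)
    simpa only [kloostermanIntegral, mul_assoc] using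
      kloostermanIntegral_eq_zero_of_norm_ne μ hψ_triv hψ_nontriv hne h1

end Kloosterman

end PadicAddChar

open PadicAddChar in
theorem integral_vanishes_valuation_plus_one_general
    (p : ℕ) [Fact p.Prime]
    [MeasurableSpace ℚ_[p]] [BorelSpace ℚ_[p]]
    (ψ : AddChar ℚ_[p] ℂ)
    (hψ_triv : ∀ x : ℚ_[p], ‖x‖ ≤ (p : ℝ)⁻¹ → ψ x = 1)
    (hψ_nontriv : ∃ x : ℚ_[p], ‖x‖ ≤ 1 ∧ ψ x ≠ 1)
    (μ : Measure ℚ_[p]) [μ.IsAddHaarMeasure]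
    (B C : ℚ_[p]) (hB : B ≠ 0) (hC : C ≠ 0)
    (hBC : C.valuation = B.valuation + 1) (hC0 : C.valuation ≤ 0) :
    ∃ L : ℕ, ∀ ℓ : ℕ, L ≤ ℓ →
      (∫ x in {x : ℚ_[p] × ℚ_[p] × ℚ_[p] |
          ‖x.1‖ ≤ (p : ℝ) ^ ℓ ∧ ‖x.2.1‖ ≤ (p : ℝ) ^ ℓ ∧ ‖x.2.2‖ ≤ (p : ℝ) ^ ℓ ∧
            ‖x.1 ^ 2 + x.2.1 * x.2.2‖ ≤ 1},
        ψ (x.2.1 * C + x.2.2 * B) ∂(μ.prod (μ.prod μ))) = 0 :=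
  ⟨0, fun ℓ _ ↦ setIntegral_apply_mul_add_mul_eq_zero μ hψ_triv hψ_nontriv
    (one_le_norm_of_valuation_nonpos hC hC0)
    (norm_eq_prime_mul_norm_of_valuation_eq_add_one hB hC hBC)
    (one_le_pow₀ (by exact_mod_cast (Fact.out : p.Prime).one_lt.le))⟩

/-- For `p` an odd prime, `ψ` an additive character of `ℚ_p` with conductor `pℤ_p`
(trivial on `pℤ_p`, nontrivial on `ℤ_p`), `μ` an additive Haar measure on `ℚ_p`, and
`B, C ∈ ℚ_p^×` with `v(C) = v(B) + 1` and `v(C) ≤ 0`, there exists `L` such that for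
all `ℓ ≥ L` the integral of `ψ(b·C + c·B)` over
`T_ℓ = {(a,b,c) : a,b,c ∈ p^{-ℓ}ℤ_p, a² + b·c ∈ ℤ_p}` vanishes. -/
theorem integral_vanishes_valuation_plus_one
    (p : ℕ) [Fact p.Prime] (hp : Odd p)
    [MeasurableSpace ℚ_[p]] [BorelSpace ℚ_[p]]
    (ψ : AddChar ℚ_[p] ℂ)
    (hψ_triv : ∀ x : ℚ_[p], ‖x‖ ≤ (p : ℝ)⁻¹ → ψ x = 1)
    (hψ_nontriv : ∃ x : ℚ_[p], ‖x‖ ≤ 1 ∧ ψ x ≠ 1)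
    (μ : Measure ℚ_[p]) [μ.IsAddHaarMeasure]
    (B C : ℚ_[p]) (hB : B ≠ 0) (hC : C ≠ 0)
    (hBC : C.valuation = B.valuation + 1) (hC0 : C.valuation ≤ 0) :
    ∃ L : ℕ, ∀ ℓ : ℕ, L ≤ ℓ →
      (∫ x in {x : ℚ_[p] × ℚ_[p] × ℚ_[p] |
          ‖x.1‖ ≤ (p : ℝ) ^ ℓ ∧ ‖x.2.1‖ ≤ (p : ℝ) ^ ℓ ∧ ‖x.2.2‖ ≤ (p : ℝ) ^ ℓ ∧
            ‖x.1 ^ 2 + x.2.1 * x.2.2‖ ≤ 1},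
        ψ (x.2.1 * C + x.2.2 * B) ∂(μ.prod (μ.prod μ))) = 0 :=
  integral_vanishes_valuation_plus_one_general p ψ hψ_triv hψ_nontriv μ B C hB hC hBC hC0
end

section
/- Let p be an odd prime, let ψ : (ℚ_p,+) → ℂ^× be an additive character with conductor pℤ_p, and let μ be an additive Haar measure on ℚ_p. Fix a natural number m, and let Y be a 2×2 matrix over ℚ_p with trace(Y) = 0, det(Y) ≠ 0, and v(det Y) ≤ m. For (a,b,c) ∈ ℚ_p³ write X(a,b,c) for the trace-zero matrix [[a, b], [c, −a]], and for an integer ℓ ≥ 0 let S_ℓ = {(a,b,c) ∈ ℚ_p³ : a, b, c ∈ p^{-ℓ}ℤ_p and v(a² + b·c) ≥ −m}. Then the integrals over S_ℓ of ψ(trace(X(a,b,c)·Y)) with respect to the product measure μ³ tend to 0 as ℓ → ∞ (in fact they are eventually 0). This is the concrete form of the statement that the Fourier transform of the characteristic function of {X ∈ sl(2,ℚ_p) : v(det X) ≥ −m} is supported in {Y ∈ sl(2,ℚ_p) : v(det Y) ≥ m+1}, i.e., that FT(1_{𝔤_0}) and FT(1_{𝔤_{−1/2}}) are supported in 𝔤_{1/2}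 and 𝔤_1 respectively, and FT(1_{𝔤_{−k}}) is supported in 𝔤_{k+1/2} for integers k ≥ 1. -/
/-!
Write `X = [[a, b], [c, -a]]` and `Y = [[α, β], [γ, -α]]`. Then `trace (X Y) = t(x)` is the polar
form of `q(x) = a² + bc = -det X` evaluated at `y = (α, β, γ)`, and `q(y) = -det Y`. Split the
domain according to `‖t‖`.

Where `‖t‖ ≤ 1`, the translations `x ↦ x + j (2 q(y))⁻¹ y`, `0 ≤ j < p`, add `j` to `t` and, once
`p^ℓ ≥ ‖y‖ / ‖q(y)‖`, preserve the domain: the resulting changes of `q` are bounded by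
`‖q(y)‖⁻¹ ≤ p^m` because `‖2‖ = 1` for odd `p`. Where `‖t‖ = p^(n+1)`, the scalings by the units
`1 + j p^(n+1)` preserve the domain and add `j p^(n+1) t` to `t`. Both families preserve Haar
measure, and in both cases the `p` transformed integrands sum to `ψ(t) ∑ ψ(z)^j = 0`, where
`ψ(z) ≠ 1` is a `p`-th root of unity because `‖z‖ = 1`.
-/

open MeasureTheory Filter Topology

instance Prod.isUltrametricDist {X Y : Type*} [PseudoMetricSpace X] [PseudoMetricSpace Y]
    [IsUltrametricDist X] [IsUltrametricDist Y] : IsUltrametricDist (X × Y) where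
  dist_triangle_max x y z := by
    simp only [Prod.dist_eq]
    exact max_le
      ((IsUltrametricDist.dist_triangle_max _ _ _).trans
        (max_le_max (le_max_left _ _) (le_max_left _ _)))
      ((IsUltrametricDist.dist_triangle_max _ _ _).trans
        (max_le_max (le_max_right _ _) (le_max_right _ _)))

theorem AddChar.continuous_of_eventually_eq_one_s8 {A M : Type*} [AddGroup A] [TopologicalSpace A]
    [IsTopologicalAddGroup A] [Monoid M] [TopologicalSpace M] (ψ : AddChar A M)
    (h : ∀ᶠ x in 𝓝 0, ψ x = 1) : Continuous ψ := by
  refine continuous_iff_continuousAt.2 fun x => ?_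
  have hx : ∀ᶠ y in 𝓝 x, ψ (-x + y) = 1 :=
    ((continuous_const_add (-x)).tendsto' x 0 (neg_add_cancel x)).eventually h
  refine (continuousAt_const (y := ψ x)).congr (hx.mono fun y hy => ?_)
  rw [← add_neg_cancel_left x y, AddChar.map_add_eq_mul, hy, mul_one]

theorem AddChar.sum_range_apply_add_mul_eq_zero {A R : Type*} [Ring A] [CommRing R] [IsDomain R]
    (ψ : AddChar A R) {n : ℕ} {z : A} (hz : ψ z ≠ 1) (hn : ψ (n * z) = 1) (t : A) :
    ∑ j ∈ Finset.range n, ψ (t + j * z) = 0 := by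
  have hpow : ∀ j : ℕ, ψ (j * z) = ψ z ^ j := fun j => by
    rw [← nsmul_eq_mul, AddChar.map_nsmul_eq_pow]
  have hgeom : ∑ j ∈ Finset.range n, ψ z ^ j = 0 := by
    refine (mul_eq_zero.1 ?_).resolve_left (sub_ne_zero.2 hz)
    rw [mul_geom_sum, ← hpow, hn, sub_self]
  simp_rw [AddChar.map_add_eq_mul, hpow, ← Finset.mul_sum, hgeom, mul_zero]

theorem MeasureTheory.setIntegral_eq_zero_of_sum_comp_eq_zero {E G ι : Type*} [MeasurableSpace E]
    [NormedAddCommGroup G] [NormedSpace ℝ G] {ν : Measure E} {P : Set E} (hP : MeasurableSet P)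
    {f : E → G} (hf : IntegrableOn f P ν) {s : Finset ι} (hs : s.Nonempty) (T : ι → E ≃ᵐ E)
    (hT : ∀ i ∈ s, MeasurePreserving (T i) ν ν) (hTP : ∀ i ∈ s, T i ⁻¹' P = P)
    (hsum : ∀ x ∈ P, ∑ i ∈ s, f (T i x) = 0) : ∫ x in P, f x ∂ν = 0 := by
  have hcomp : ∀ i ∈ s, ∫ x in P, f (T i x) ∂ν = ∫ x in P, f x ∂ν := fun i hi => by
    conv_lhs => rw [← hTP i hi]
    exact (hT i hi).setIntegral_preimage_emb (T i).measurableEmbedding f P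
  have hint : ∀ i ∈ s, IntegrableOn (fun x => f (T i x)) P ν := fun i hi => by
    have := ((hT i hi).integrableOn_comp_preimage (T i).measurableEmbedding).2 hf
    rwa [hTP i hi] at this
  have hcard : s.card • ∫ x in P, f x ∂ν = 0 := by
    rw [← Finset.sum_const, ← Finset.sum_congr rfl hcomp, ← integral_finsetSum s hint,
      setIntegral_congr_fun hP hsum, integral_zero]
  rw [← Nat.cast_smul_eq_nsmul ℝ] at hcard
  exact (smul_eq_zero.1 hcard).resolve_left (Nat.cast_ne_zero.2 hs.card_ne_zero)

theorem MeasureTheory.Measure.measurePreserving_of_preimage_eq {G : Type*} [AddGroup G]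
    [TopologicalSpace G] [IsTopologicalAddGroup G] [LocallyCompactSpace G]
    [SecondCountableTopology G] [MeasurableSpace G] [BorelSpace G] (μ : Measure G)
    [μ.IsAddHaarMeasure] (e : G ≃ₜ+ G) (K : TopologicalSpace.PositiveCompacts G)
    (hK : e ⁻¹' K = K) : MeasurePreserving e μ μ := by
  refine ⟨e.continuous.measurable, ?_⟩
  have hmap : μ.map e K = μ K :=
    (e.toHomeomorph.toMeasurableEquiv.map_apply (μ := μ) K).trans (congrArg μ hK)
  rw [addHaarMeasure_unique (μ.map e) K, hmap, ← addHaarMeasure_unique μ K]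

theorem MeasureTheory.Measure.measurePreserving_smul_of_norm_eq_one {𝕜 E : Type*}
    [NontriviallyNormedField 𝕜] [NormedAddCommGroup E] [NormedSpace 𝕜 E] [ProperSpace E]
    [MeasurableSpace E] [BorelSpace E] (μ : Measure E) [μ.IsAddHaarMeasure] {u : 𝕜}
    (hu : ‖u‖ = 1) : MeasurePreserving (u • ·) μ μ := by
  have hu0 : u ≠ 0 := norm_ne_zero_iff.1 (by simp [hu])
  let K : TopologicalSpace.PositiveCompacts E :=
    ⟨⟨Metric.closedBall 0 1, isCompact_closedBall 0 1⟩,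
      (Metric.nonempty_ball.2 one_pos).mono
        (interior_maximal Metric.ball_subset_closedBall Metric.isOpen_ball)⟩
  refine measurePreserving_of_preimage_eq μ
    (ContinuousLinearEquiv.smulLeft (R₁ := 𝕜) (Units.mk0 u hu0)).toContinuousAddEquiv K ?_
  ext x
  simp [K, norm_smul, hu]

section Padic

variable {p : ℕ} [Fact p.Prime]

theorem Padic.exists_nat_norm_sub_le_inv {z : ℚ_[p]} (hz : ‖z‖ ≤ 1) :
    ∃ k : ℕ, ‖z - k‖ ≤ (p : ℝ)⁻¹ := by
  obtain ⟨z, rfl⟩ : ∃ y : ℤ_[p], (y : ℚ_[p]) = z := ⟨⟨z, hz⟩, rfl⟩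
  refine ⟨PadicInt.appr z 1, ?_⟩
  simpa [PadicInt.norm_def] using
    (PadicInt.norm_le_pow_iff_mem_span_pow _ 1).2 (PadicInt.appr_spec 1 z)

theorem Padic.norm_two_of_odd (hp : Odd p) : ‖(2 : ℚ_[p])‖ = 1 := by
  exact_mod_cast Padic.norm_natCast_eq_one_iff.2 hp.coprime_two_right

theorem Padic.norm_le_one_or_exists_norm_eq_pow_succ (z : ℚ_[p]) :
    ‖z‖ ≤ 1 ∨ ∃ n : ℕ, ‖z‖ = (p : ℝ) ^ (n + 1) := by
  rcases eq_or_ne z 0 with rfl | hz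
  · simp
  rw [Padic.norm_eq_zpow_neg_valuation hz]
  rcases le_or_gt (-z.valuation) 0 with h | h
  · exact Or.inl (zpow_le_one_of_nonpos₀ (by exact_mod_cast (Fact.out : p.Prime).one_le) h)
  · refine Or.inr ⟨(-z.valuation).toNat - 1, ?_⟩
    rw [← zpow_natCast]
    congr 1
    omega

theorem Padic.norm_one_add_mul_pow_succ (j n : ℕ) : ‖1 + (j : ℚ_[p]) * p ^ (n + 1)‖ = 1 := by
  have hlt : ‖(j : ℚ_[p]) * p ^ (n + 1)‖ < 1 := by
    rw [norm_mul, norm_pow, Padic.norm_p]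
    calc ‖(j : ℚ_[p])‖ * (p : ℝ)⁻¹ ^ (n + 1) ≤ 1 * (p : ℝ)⁻¹ ^ (n + 1) := by
          gcongr; exact_mod_cast Padic.norm_int_le_one j
      _ < 1 := by
        rw [one_mul]
        exact pow_lt_one₀ (by positivity)
          (inv_lt_one_of_one_lt₀ (by exact_mod_cast (Fact.out : p.Prime).one_lt)) (by omega)
  rw [add_comm, IsUltrametricDist.norm_add_eq_max_of_norm_ne_norm (by simpa using hlt.ne),
    norm_one]
  simpa using hlt.le

theorem Padic.norm_inv_le_pow_of_valuation_le {x : ℚ_[p]} (hx : x ≠ 0) {m : ℕ}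
    (h : x.valuation ≤ m) : ‖x‖⁻¹ ≤ (p : ℝ) ^ m := by
  rw [Padic.norm_eq_zpow_neg_valuation hx, ← zpow_neg, neg_neg, ← zpow_natCast]
  exact zpow_le_zpow_right₀ (by exact_mod_cast (Fact.out : p.Prime).one_le) h

variable (ψ : AddChar ℚ_[p] ℂ)

theorem AddChar.apply_prime_mul_eq_one (hψ_triv : ∀ x : ℚ_[p], ‖x‖ ≤ (p : ℝ)⁻¹ → ψ x = 1)
    {z : ℚ_[p]} (hz : ‖z‖ ≤ 1) : ψ (p * z) = 1 :=
  hψ_triv _ (by rw [norm_mul, Padic.norm_p]; exact mul_le_of_le_one_right (by positivity) hz)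

theorem AddChar.apply_ne_one_of_norm_eq_one
    (hψ_triv : ∀ x : ℚ_[p], ‖x‖ ≤ (p : ℝ)⁻¹ → ψ x = 1)
    (hψ_nontriv : ∃ x : ℚ_[p], ‖x‖ ≤ 1 ∧ ψ x ≠ 1) {w : ℚ_[p]} (hw : ‖w‖ = 1) : ψ w ≠ 1 := by
  intro hw1
  obtain ⟨x, hx, hψx⟩ := hψ_nontriv
  have hw0 : w ≠ 0 := norm_ne_zero_iff.1 (by simp [hw])
  obtain ⟨k, hk⟩ := Padic.exists_nat_norm_sub_le_inv (z := x / w) (by simpa [hw] using hx)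
  have hsmall : ‖x - k * w‖ ≤ (p : ℝ)⁻¹ := by
    rwa [show x - k * w = (x / w - k) * w by field_simp, norm_mul, hw, mul_one]
  refine hψx ?_
  rw [← sub_add_cancel x (k * w), AddChar.map_add_eq_mul, hψ_triv _ hsmall, one_mul,
    ← nsmul_eq_mul, AddChar.map_nsmul_eq_pow, hw1, one_pow]

end Padic

namespace Sl2

section Algebra

variable {R : Type*} [CommRing R]

/-- With `x = (a, b, c)` standing for `[[a, b], [c, -a]]`, this is `-det`. -/
def quadForm (x : R × R × R) : R := x.1 ^ 2 + x.2.1 * x.2.2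

def polarForm (x y : R × R × R) : R := 2 * x.1 * y.1 + x.2.1 * y.2.2 + x.2.2 * y.2.1

theorem trace_mul_eq_polarForm (x : R × R × R) {Y : Matrix (Fin 2) (Fin 2) R}
    (hY : Y.trace = 0) :
    (!![x.1, x.2.1; x.2.2, -x.1] * Y).trace = polarForm x (Y 0 0, Y 0 1, Y 1 0) := by
  rw [Matrix.trace_fin_two] at hY ⊢
  simp only [Matrix.mul_apply, Fin.sum_univ_two, Matrix.of_apply, Matrix.cons_val',
    Matrix.cons_val_fin_one, Matrix.cons_val_zero, Matrix.cons_val_one, polarForm]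
  linear_combination (-x.1) * hY

theorem det_eq_neg_quadForm {Y : Matrix (Fin 2) (Fin 2) R} (hY : Y.trace = 0) :
    Y.det = -quadForm (Y 0 0, Y 0 1, Y 1 0) := by
  rw [Matrix.trace_fin_two] at hY
  rw [Matrix.det_fin_two, quadForm]
  linear_combination Y 0 0 * hY

theorem quadForm_smul (c : R) (x : R × R × R) : quadForm (c • x) = c ^ 2 * quadForm x := by
  simp only [quadForm, Prod.smul_fst, Prod.smul_snd, smul_eq_mul]
  ring

theorem polarForm_smul_left (c : R) (x y : R × R × R) :
    polarForm (c • x) y = c * polarForm x y := by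
  simp only [polarForm, Prod.smul_fst, Prod.smul_snd, smul_eq_mul]
  ring

theorem quadForm_add_smul (x y : R × R × R) (e : R) :
    quadForm (x + e • y) = quadForm x + e * polarForm x y + e ^ 2 * quadForm y := by
  simp only [quadForm, polarForm, Prod.fst_add, Prod.snd_add, Prod.smul_fst, Prod.smul_snd,
    smul_eq_mul]
  ring

theorem polarForm_add_smul_left (x y : R × R × R) (e : R) :
    polarForm (x + e • y) y = polarForm x y + 2 * e * quadForm y := by
  simp only [quadForm, polarForm, Prod.fst_add, Prod.snd_add, Prod.smul_fst, Prod.smul_snd,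
    smul_eq_mul]
  ring

variable [TopologicalSpace R] [IsTopologicalRing R]

@[fun_prop]
theorem continuous_quadForm : Continuous (quadForm : R × R × R → R) := by
  unfold quadForm; fun_prop

@[fun_prop]
theorem continuous_polarForm_left (y : R × R × R) : Continuous (polarForm · y) := by
  unfold polarForm; fun_prop

end Algebra

section Region

variable {R : Type*} [NormedCommRing R]

def region (r s : ℝ) : Set (R × R × R) := {x | ‖x‖ ≤ r ∧ ‖quadForm x‖ ≤ s}

theorem isClosed_region (r s : ℝ) : IsClosed (region r s : Set (R × R × R)) :=
  (isClosed_le continuous_norm continuous_const).inter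
    (isClosed_le (continuous_norm.comp continuous_quadForm) continuous_const)

theorem isCompact_region [ProperSpace R] (r s : ℝ) : IsCompact (region r s : Set (R × R × R)) :=
  (isCompact_closedBall 0 r).of_isClosed_subset (isClosed_region r s)
    fun _ hx => mem_closedBall_zero_iff.2 hx.1

theorem smul_mem_region_iff {𝕜 : Type*} [NormedField 𝕜] {u : 𝕜} (hu : ‖u‖ = 1) {r s : ℝ}
    {x : 𝕜 × 𝕜 × 𝕜} : u • x ∈ region r s ↔ x ∈ region r s := by
  simp [region, quadForm_smul, norm_smul, hu]

end Region

section Ultrametric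

variable {𝕜 : Type*} [NormedField 𝕜] [IsUltrametricDist 𝕜]

def innerPart (r s : ℝ) (y : 𝕜 × 𝕜 × 𝕜) : Set (𝕜 × 𝕜 × 𝕜) :=
  region r s ∩ {x | ‖polarForm x y‖ ≤ 1}

theorem add_smul_mem_innerPart {r s : ℝ} {y : 𝕜 × 𝕜 × 𝕜} (hr : ‖quadForm y‖⁻¹ * ‖y‖ ≤ r)
    (hs : ‖quadForm y‖⁻¹ ≤ s) {e : 𝕜} (he : ‖e‖ ≤ ‖quadForm y‖⁻¹) {x : 𝕜 × 𝕜 × 𝕜}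
    (hx : x ∈ innerPart r s y) : x + e • y ∈ innerPart r s y := by
  obtain ⟨⟨hxr, hxs⟩, hxt⟩ := hx
  have hxt' : ‖polarForm x y‖ ≤ 1 := hxt
  have heq : ‖e‖ * ‖quadForm y‖ ≤ 1 :=
    (mul_le_mul_of_nonneg_right he (norm_nonneg _)).trans inv_mul_le_one
  refine ⟨⟨?_, ?_⟩, ?_⟩
  · refine (IsUltrametricDist.norm_add_le_max _ _).trans (max_le hxr ?_)
    rw [norm_smul]
    exact (mul_le_mul_of_nonneg_right he (norm_nonneg _)).trans hr
  · rw [quadForm_add_smul]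
    refine (IsUltrametricDist.norm_add_le_max _ _).trans (max_le
      ((IsUltrametricDist.norm_add_le_max _ _).trans (max_le hxs ?_)) ?_)
    · rw [norm_mul]
      exact (mul_le_of_le_one_right (norm_nonneg _) hxt').trans (he.trans hs)
    · rw [norm_mul, norm_pow, sq, mul_assoc]
      exact (mul_le_of_le_one_right (norm_nonneg _) heq).trans (he.trans hs)
  · show ‖polarForm (x + e • y) y‖ ≤ 1
    rw [polarForm_add_smul_left]
    refine (IsUltrametricDist.norm_add_le_max _ _).trans (max_le hxt' ?_)
    rw [norm_mul, norm_mul, mul_assoc]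
    exact mul_le_one₀ (by exact_mod_cast IsUltrametricDist.norm_natCast_le_one 𝕜 2)
      (by positivity) heq

end Ultrametric

section Padic

variable {p : ℕ} [Fact p.Prime]

def shell (r s : ℝ) (y : ℚ_[p] × ℚ_[p] × ℚ_[p]) (n : ℕ) : Set (ℚ_[p] × ℚ_[p] × ℚ_[p]) :=
  region r s ∩ {x | ‖polarForm x y‖ = (p : ℝ) ^ (n + 1)}

variable {r s : ℝ} {y : ℚ_[p] × ℚ_[p] × ℚ_[p]}

theorem smul_mem_shell_iff {u : ℚ_[p]} (hu : ‖u‖ = 1) {n : ℕ} {x : ℚ_[p] × ℚ_[p] × ℚ_[p]} :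
    u • x ∈ shell r s y n ↔ x ∈ shell r s y n := by
  simp only [shell, Set.mem_inter_iff, smul_mem_region_iff hu, Set.mem_ofPred_eq,
    polarForm_smul_left, norm_mul, hu, one_mul]

theorem region_eq_innerPart_union_iUnion_shell :
    region r s = innerPart r s y ∪ ⋃ n, shell r s y n := by
  ext x
  constructor
  · intro hx
    rcases Padic.norm_le_one_or_exists_norm_eq_pow_succ (polarForm x y) with h | ⟨n, h⟩
    exacts [Or.inl ⟨hx, h⟩, Or.inr (Set.mem_iUnion.2 ⟨n, hx, h⟩)]
  · rintro (hx | hx)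
    · exact hx.1
    · exact (Set.mem_iUnion.1 hx).choose_spec.1

theorem disjoint_innerPart_iUnion_shell : Disjoint (innerPart r s y) (⋃ n, shell r s y n) := by
  refine Set.disjoint_iUnion_right.2 fun n => Set.disjoint_left.2 fun x hx hxn => ?_
  have h1 : ‖polarForm x y‖ ≤ 1 := hx.2
  rw [hxn.2] at h1
  exact h1.not_gt (one_lt_pow₀ (by exact_mod_cast (Fact.out : p.Prime).one_lt) n.succ_ne_zero)

theorem pairwise_disjoint_shell : Pairwise (Function.onFun Disjoint (shell r s y)) := by
  intro i j hij
  refine Set.disjoint_left.2 fun x hxi hxj => hij ?_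
  have := hxi.2.symm.trans hxj.2
  exact Nat.succ_injective
    (Nat.pow_right_injective (Fact.out : p.Prime).two_le (by exact_mod_cast this))

theorem measurableSet_shell [MeasurableSpace ℚ_[p]] [BorelSpace ℚ_[p]] (n : ℕ) :
    MeasurableSet (shell r s y n) :=
  ((isClosed_region r s).inter (isClosed_eq (by fun_prop) continuous_const)).measurableSet

variable [MeasurableSpace ℚ_[p]] [BorelSpace ℚ_[p]] (ψ : AddChar ℚ_[p] ℂ)
  (ν : Measure (ℚ_[p] × ℚ_[p] × ℚ_[p])) [ν.IsAddHaarMeasure]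

theorem integrableOn_region (hψ_triv : ∀ x : ℚ_[p], ‖x‖ ≤ (p : ℝ)⁻¹ → ψ x = 1) (r s : ℝ)
    (y : ℚ_[p] × ℚ_[p] × ℚ_[p]) : IntegrableOn (fun x => ψ (polarForm x y)) (region r s) ν :=
  ((ψ.continuous_of_eventually_eq_one_s8 (Filter.mem_of_superset
    (Metric.closedBall_mem_nhds 0 (inv_pos.2 (by exact_mod_cast (Fact.out : p.Prime).pos)))
    fun x hx => hψ_triv x (mem_closedBall_zero_iff.1 hx))).comp
    (continuous_polarForm_left y)).continuousOn.integrableOn_compact (isCompact_region r s)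

theorem setIntegral_innerPart_eq_zero (hp : Odd p)
    (hψ_triv : ∀ x : ℚ_[p], ‖x‖ ≤ (p : ℝ)⁻¹ → ψ x = 1)
    (hψ_nontriv : ∃ x : ℚ_[p], ‖x‖ ≤ 1 ∧ ψ x ≠ 1) (hy : quadForm y ≠ 0)
    (hr : ‖quadForm y‖⁻¹ * ‖y‖ ≤ r) (hs : ‖quadForm y‖⁻¹ ≤ s) :
    ∫ x in innerPart r s y, ψ (polarForm x y) ∂ν = 0 := by
  set e : ℚ_[p] := (2 * quadForm y)⁻¹ with he_def
  have h2e : 2 * e * quadForm y = 1 := by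
    rw [he_def, mul_right_comm, mul_inv_cancel₀ (mul_ne_zero two_ne_zero hy)]
  have he : ∀ j : ℕ, ‖(j : ℚ_[p]) * e‖ ≤ ‖quadForm y‖⁻¹ := fun j => by
    rw [norm_mul, norm_inv, norm_mul, Padic.norm_two_of_odd hp, one_mul]
    exact mul_le_of_le_one_left (by positivity) (IsUltrametricDist.norm_natCast_le_one _ j)
  have hpre : ∀ j : ℕ, MeasurableEquiv.addRight (((j : ℚ_[p]) * e) • y) ⁻¹' innerPart r s y =
      innerPart r s y := fun j => Set.ext fun x => by
    refine ⟨fun hx => ?_, add_smul_mem_innerPart hr hs (he j)⟩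
    simpa using add_smul_mem_innerPart hr hs ((norm_neg ((j : ℚ_[p]) * e)).trans_le (he j)) hx
  have hshift : ∀ (x) (j : ℕ), polarForm (x + ((j : ℚ_[p]) * e) • y) y = polarForm x y + j * 1 :=
    fun x j => by
      rw [polarForm_add_smul_left]
      linear_combination (j : ℚ_[p]) * h2e
  refine setIntegral_eq_zero_of_sum_comp_eq_zero
    ((isClosed_region r s).inter (isClosed_le (by fun_prop) continuous_const)).measurableSet
    ((integrableOn_region ψ ν hψ_triv r s y).mono_set Set.inter_subset_left)
    (Finset.nonempty_range_iff.2 (Fact.out : p.Prime).ne_zero)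
    (fun j => MeasurableEquiv.addRight (((j : ℚ_[p]) * e) • y))
    (fun j _ => measurePreserving_add_right ν _) (fun j _ => hpre j) fun x _ => ?_
  simp_rw [MeasurableEquiv.coe_addRight, hshift]
  exact ψ.sum_range_apply_add_mul_eq_zero
    (ψ.apply_ne_one_of_norm_eq_one hψ_triv hψ_nontriv norm_one)
    (ψ.apply_prime_mul_eq_one hψ_triv norm_one.le) _

theorem setIntegral_shell_eq_zero (hψ_triv : ∀ x : ℚ_[p], ‖x‖ ≤ (p : ℝ)⁻¹ → ψ x = 1)
    (hψ_nontriv : ∃ x : ℚ_[p], ‖x‖ ≤ 1 ∧ ψ x ≠ 1) (n : ℕ) :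
    ∫ x in shell r s y n, ψ (polarForm x y) ∂ν = 0 := by
  set u : ℕ → ℚ_[p] := fun j => 1 + j * (p : ℚ_[p]) ^ (n + 1)
  have hu : ∀ j, ‖u j‖ = 1 := fun j => Padic.norm_one_add_mul_pow_succ j n
  have hu0 : ∀ j, u j ≠ 0 := fun j => norm_ne_zero_iff.1 (by simp [hu j])
  refine setIntegral_eq_zero_of_sum_comp_eq_zero (measurableSet_shell n)
    ((integrableOn_region ψ ν hψ_triv r s y).mono_set Set.inter_subset_left)
    (Finset.nonempty_range_iff.2 (Fact.out : p.Prime).ne_zero)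
    (fun j => MeasurableEquiv.smul₀ _ (hu0 j))
    (fun j _ => Measure.measurePreserving_smul_of_norm_eq_one ν (hu j))
    (fun j _ => Set.ext fun x => smul_mem_shell_iff (hu j)) ?_
  rintro x ⟨-, hx⟩
  have hz : ‖(p : ℚ_[p]) ^ (n + 1) * polarForm x y‖ = 1 := by
    rw [norm_mul, norm_pow, Padic.norm_p, show ‖polarForm x y‖ = _ from hx, ← mul_pow,
      inv_mul_cancel₀ (by exact_mod_cast (Fact.out : p.Prime).ne_zero), one_pow]
  have hscale : ∀ j : ℕ,
      polarForm (u j • x) y = polarForm x y + j * ((p : ℚ_[p]) ^ (n + 1) * polarForm x y) :=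
    fun j => by rw [polarForm_smul_left]; ring
  simp_rw [MeasurableEquiv.coe_smul₀, hscale]
  exact ψ.sum_range_apply_add_mul_eq_zero (ψ.apply_ne_one_of_norm_eq_one hψ_triv hψ_nontriv hz)
    (ψ.apply_prime_mul_eq_one hψ_triv hz.le) _

theorem setIntegral_region_eq_zero (hp : Odd p)
    (hψ_triv : ∀ x : ℚ_[p], ‖x‖ ≤ (p : ℝ)⁻¹ → ψ x = 1)
    (hψ_nontriv : ∃ x : ℚ_[p], ‖x‖ ≤ 1 ∧ ψ x ≠ 1) (hy : quadForm y ≠ 0)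
    (hr : ‖quadForm y‖⁻¹ * ‖y‖ ≤ r) (hs : ‖quadForm y‖⁻¹ ≤ s) :
    ∫ x in region r s, ψ (polarForm x y) ∂ν = 0 := by
  have hint := integrableOn_region ψ ν hψ_triv r s y
  rw [region_eq_innerPart_union_iUnion_shell (y := y)] at hint ⊢
  rw [setIntegral_union disjoint_innerPart_iUnion_shell (.iUnion measurableSet_shell)
      (hint.mono_set Set.subset_union_left) (hint.mono_set Set.subset_union_right),
    integral_iUnion measurableSet_shell pairwise_disjoint_shell
      (hint.mono_set Set.subset_union_right),
    setIntegral_innerPart_eq_zero ψ ν hp hψ_triv hψ_nontriv hy hr hs]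
  simp [setIntegral_shell_eq_zero ψ ν hψ_triv hψ_nontriv]

end Padic

end Sl2

/-- For `p` an odd prime, `ψ` an additive character of `ℚ_p` with conductor `pℤ_p`,
`μ` an additive Haar measure on `ℚ_p`, `m : ℕ`, and `Y ∈ sl(2,ℚ_p)` with
`det Y ≠ 0` and `v(det Y) ≤ m`, the integrals over
`S_ℓ = {(a,b,c) : a,b,c ∈ p^{-ℓ}ℤ_p, v(a² + b·c) ≥ -m}` of
`ψ(trace(X(a,b,c)·Y))`, with `X(a,b,c) = !![a, b; c, -a]`, are eventually `0` as
`ℓ → ∞`.  This expresses that the Fourier transform of the characteristic function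
of `{X ∈ sl(2,ℚ_p) : v(det X) ≥ -m}` is supported in
`{Y ∈ sl(2,ℚ_p) : v(det Y) ≥ m + 1}`. -/
theorem fourier_transform_support
    (p : ℕ) [Fact p.Prime] (hp : Odd p)
    [MeasurableSpace ℚ_[p]] [BorelSpace ℚ_[p]]
    (ψ : AddChar ℚ_[p] ℂ)
    (hψ_triv : ∀ x : ℚ_[p], ‖x‖ ≤ (p : ℝ)⁻¹ → ψ x = 1)
    (hψ_nontriv : ∃ x : ℚ_[p], ‖x‖ ≤ 1 ∧ ψ x ≠ 1)
    (μ : Measure ℚ_[p]) [μ.IsAddHaarMeasure]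
    (m : ℕ)
    (Y : Matrix (Fin 2) (Fin 2) ℚ_[p]) (htr : Y.trace = 0) (hdet : Y.det ≠ 0)
    (hval : (Y.det).valuation ≤ (m : ℤ)) :
    ∃ L : ℕ, ∀ ℓ : ℕ, L ≤ ℓ →
      (∫ x in {x : ℚ_[p] × ℚ_[p] × ℚ_[p] |
          ‖x.1‖ ≤ (p : ℝ) ^ ℓ ∧ ‖x.2.1‖ ≤ (p : ℝ) ^ ℓ ∧ ‖x.2.2‖ ≤ (p : ℝ) ^ ℓ ∧
            ‖x.1 ^ 2 + x.2.1 * x.2.2‖ ≤ (p : ℝ) ^ m},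
        ψ ((!![x.1, x.2.1; x.2.2, -x.1] * Y).trace) ∂(μ.prod (μ.prod μ))) = 0 := by
  set y : ℚ_[p] × ℚ_[p] × ℚ_[p] := (Y 0 0, Y 0 1, Y 1 0)
  have hdetY := Sl2.det_eq_neg_quadForm htr
  have hy : Sl2.quadForm y ≠ 0 := fun h => hdet (by rw [hdetY, h, neg_zero])
  have hs : ‖Sl2.quadForm y‖⁻¹ ≤ (p : ℝ) ^ m := by
    rw [← norm_neg, ← hdetY]
    exact Padic.norm_inv_le_pow_of_valuation_le hdet hval
  have hp1 : (1 : ℝ) < p := by exact_mod_cast (Fact.out : p.Prime).one_lt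
  obtain ⟨L, hL⟩ := pow_unbounded_of_one_lt (‖Sl2.quadForm y‖⁻¹ * ‖y‖) hp1
  refine ⟨L, fun ℓ hℓ => ?_⟩
  have hregion : {x : ℚ_[p] × ℚ_[p] × ℚ_[p] |
      ‖x.1‖ ≤ (p : ℝ) ^ ℓ ∧ ‖x.2.1‖ ≤ (p : ℝ) ^ ℓ ∧ ‖x.2.2‖ ≤ (p : ℝ) ^ ℓ ∧
        ‖x.1 ^ 2 + x.2.1 * x.2.2‖ ≤ (p : ℝ) ^ m} = Sl2.region ((p : ℝ) ^ ℓ) ((p : ℝ) ^ m) := by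
    ext x
    simp only [Sl2.region, Sl2.quadForm, norm_prod_le_iff, and_assoc, Set.mem_ofPred_eq]
  have := Measure.prod.instIsAddHaarMeasure μ (μ.prod μ)
  simp_rw [hregion, Sl2.trace_mul_eq_polarForm _ htr]
  exact Sl2.setIntegral_region_eq_zero ψ _ hp hψ_triv hψ_nontriv hy
    (hL.le.trans (pow_le_pow_right₀ hp1.le hℓ)) hs
end
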